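/- arXiv:2004.12355 — 4 statements merged into one kernel-verified Lean document; each statement's English description precedes it below -/
import Mathlib

section
/- Let U be a nonnegative random variable and let κ > 0, C > 0. If P(U > t) ≍ C t^{−κ} as t → ∞, then E[U^κ 1{U ≤ t}] ≍ κ C ln t as t → ∞. Consequently, if moreover U is the unique-in-law solution of U =_d A U + B (with U independent of (A,B)) satisfying E[U^κ 1{U ≤ t}] ≍ (E[(AU+B)^κ − (AU)^κ]/E[A^κ ln A]) ln t, then C = E[(AU+B)^κ − (AU)^κ]/(κ E[A^κ ln A]). -/
/-!
Write `g t = E[U^κ 1{U ≤ t}]` and `G t = P(U > t)`. For `0 ≤ s ≤ t` the increment `g t - g s` is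
the integral of `U^κ` over `{s < U ≤ t}`, so it lies between `s^κ (G s - G t)` and
`t^κ (G s - G t)`. Over a logarithmic step `t = e^δ s`, the tail asymptotics `s^κ G s → C` make
these bounds tend to `C (1 - e^{-κδ})` and `C (e^{κδ} - 1)`. Summing the steps, `g (e^u) / u`
eventually lies between `C (1 - e^{-κδ}) / δ` and `C (e^{κδ} - 1) / δ`, and both tend to `κ C`
as `δ → 0`. For the second assertion, `a log t` and `b log t` cannot both be equivalent to the
same function unless `a = b`.
-/

open MeasureTheory ProbabilityTheory Filter Topology Real

theorem le_add_mul_of_step_le {φ : ℝ → ℝ} {u₀ δ M : ℝ}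
    (h : ∀ u ≥ u₀, φ (u + δ) ≤ φ u + M) (hδ : 0 ≤ δ) (n : ℕ) :
    φ (u₀ + n * δ) ≤ φ u₀ + n * M := by
  induction n with
  | zero => simp
  | succ n ih =>
    have hn := h (u₀ + n * δ) (by nlinarith [n.cast_nonneg (α := ℝ)])
    rw [Nat.cast_succ, add_one_mul, ← add_assoc]
    linarith

theorem eventually_add_mul_lt_mul {b a : ℝ} (c : ℝ) (h : b < a) :
    ∀ᶠ u in atTop, c + b * u < a * u := by
  filter_upwards [eventually_gt_atTop (c / (a - b))] with u hu
  rw [div_lt_iff₀ (sub_pos.2 h)] at hu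
  linarith

theorem eventually_lt_mul_of_step_le {φ : ℝ → ℝ} {δ b a : ℝ} (hφ : Monotone φ) (hδ : 0 < δ)
    (hstep : ∀ᶠ u in atTop, φ (u + δ) ≤ φ u + b * δ) (hba : b < a) :
    ∀ᶠ u in atTop, φ u < a * u := by
  obtain ⟨u₀, hu₀⟩ := eventually_atTop.1 hstep
  filter_upwards [eventually_add_mul_lt_mul (φ u₀ - u₀ * b + |b * δ|) hba,
    eventually_ge_atTop u₀] with u hu hu₀u
  set x := (u - u₀) / δ
  have hx : u = u₀ + x * δ := by simp only [x]; field_simp; ring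
  have hn : x ≤ ⌈x⌉₊ := Nat.le_ceil x
  have hn' : (⌈x⌉₊ : ℝ) < x + 1 := Nat.ceil_lt_add_one (div_nonneg (by linarith) hδ.le)
  calc φ u ≤ φ (u₀ + ⌈x⌉₊ * δ) := hφ (by rw [hx]; gcongr)
    _ ≤ φ u₀ + ⌈x⌉₊ * (b * δ) := le_add_mul_of_step_le hu₀ hδ.le _
    _ ≤ φ u₀ + x * (b * δ) + |b * δ| := by nlinarith [le_abs_self (b * δ), neg_abs_le (b * δ)]
    _ = φ u₀ - u₀ * b + |b * δ| + b * u := by simp only [x]; field_simp; ring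
    _ < a * u := hu

theorem eventually_mul_lt_of_le_step {φ : ℝ → ℝ} {δ b a : ℝ} (hφ : Monotone φ) (hδ : 0 < δ)
    (hstep : ∀ᶠ u in atTop, φ u + b * δ ≤ φ (u + δ)) (hab : a < b) :
    ∀ᶠ u in atTop, a * u < φ u := by
  obtain ⟨u₀, hu₀⟩ := eventually_atTop.1 hstep
  have hneg : ∀ u ≥ u₀, -φ (u + δ) ≤ -φ u + -(b * δ) := fun u hu => by linarith [hu₀ u hu]
  filter_upwards [eventually_add_mul_lt_mul (-φ u₀ + u₀ * b + |b * δ|) (neg_lt_neg hab),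
    eventually_ge_atTop u₀] with u hu hu₀u
  set x := (u - u₀) / δ
  have hx : u = u₀ + x * δ := by simp only [x]; field_simp; ring
  have hx0 : 0 ≤ x := div_nonneg (by linarith) hδ.le
  have hn : (⌊x⌋₊ : ℝ) ≤ x := Nat.floor_le hx0
  have hn' : x < ⌊x⌋₊ + 1 := Nat.lt_floor_add_one x
  have hgrid := le_add_mul_of_step_le (φ := fun v => -φ v) hneg hδ.le ⌊x⌋₊
  calc a * u < φ u₀ + x * (b * δ) - |b * δ| := by
        linarith [show x * (b * δ) = (u - u₀) * b by simp only [x]; field_simp]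
    _ ≤ φ u₀ + ⌊x⌋₊ * (b * δ) := by nlinarith [le_abs_self (b * δ), neg_abs_le (b * δ)]
    _ ≤ φ (u₀ + ⌊x⌋₊ * δ) := by linarith
    _ ≤ φ u := hφ (by rw [hx]; gcongr)

theorem exp_add_rpow (u δ κ : ℝ) : exp (u + δ) ^ κ = exp (κ * δ) * exp u ^ κ := by
  rw [← exp_mul, ← exp_mul, ← exp_add]; ring_nf

theorem eventually_lt_mul_of_tail {g G : ℝ → ℝ} {κ C a : ℝ} (hg : Monotone g)
    (hup : ∀ s t, 0 < s → s ≤ t → g t - g s ≤ t ^ κ * (G s - G t))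
    (htail : Tendsto (fun t => t ^ κ * G t) atTop (𝓝 C)) (ha : κ * C < a) :
    ∀ᶠ u in atTop, g (exp u) < a * u := by
  have hslope : Tendsto (fun δ => δ⁻¹ * (C * exp (κ * δ) - C)) (𝓝[>] 0) (𝓝 (κ * C)) := by
    have h := (((hasDerivAt_id (0 : ℝ)).const_mul κ).exp.const_mul C).tendsto_slope_zero_right
    simpa [mul_comm] using h
  obtain ⟨δ, hδa, hδ⟩ := ((hslope.eventually (gt_mem_nhds ha)).and self_mem_nhdsWithin).exists
  obtain ⟨b, hδb, hba⟩ := exists_between hδa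
  have hLb : exp (κ * δ) * C - C < b * δ := by
    rw [inv_mul_lt_iff₀ hδ] at hδb; linarith
  have hinc : Tendsto (fun u => exp (κ * δ) * (exp u ^ κ * G (exp u))
      - exp (u + δ) ^ κ * G (exp (u + δ))) atTop (𝓝 (exp (κ * δ) * C - C)) :=
    ((htail.comp tendsto_exp_atTop).const_mul _).sub
      (htail.comp (tendsto_exp_atTop.comp (tendsto_atTop_add_const_right _ δ tendsto_id)))
  refine eventually_lt_mul_of_step_le (hg.comp exp_monotone) hδ ?_ hba
  filter_upwards [hinc.eventually_lt_const hLb] with u hu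
  have hsand := hup (exp u) (exp (u + δ)) (exp_pos u) (exp_le_exp.2 (by linarith))
  simp only [exp_add_rpow] at hsand hu ⊢
  linarith

theorem eventually_mul_lt_of_tail {g G : ℝ → ℝ} {κ C a : ℝ} (hg : Monotone g)
    (hlow : ∀ s t, 0 < s → s ≤ t → s ^ κ * (G s - G t) ≤ g t - g s)
    (htail : Tendsto (fun t => t ^ κ * G t) atTop (𝓝 C)) (ha : a < κ * C) :
    ∀ᶠ u in atTop, a * u < g (exp u) := by
  have hslope : Tendsto (fun δ => δ⁻¹ * (C - C * exp (-(κ * δ)))) (𝓝[>] 0) (𝓝 (κ * C)) := by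
    have h := (((hasDerivAt_id (0 : ℝ)).const_mul κ).neg.exp.const_mul C).tendsto_slope_zero_right
    simpa [mul_comm, ← mul_neg] using h.neg
  obtain ⟨δ, hδa, hδ⟩ := ((hslope.eventually (lt_mem_nhds ha)).and self_mem_nhdsWithin).exists
  obtain ⟨b, hab, hbδ⟩ := exists_between hδa
  have hbL : b * δ < C - exp (-(κ * δ)) * C := by
    rw [lt_inv_mul_iff₀ hδ] at hbδ; linarith
  have hinc : Tendsto (fun u => exp u ^ κ * G (exp u)
      - exp (-(κ * δ)) * (exp (u + δ) ^ κ * G (exp (u + δ)))) atTop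
      (𝓝 (C - exp (-(κ * δ)) * C)) :=
    (htail.comp tendsto_exp_atTop).sub ((htail.comp
      (tendsto_exp_atTop.comp (tendsto_atTop_add_const_right _ δ tendsto_id))).const_mul _)
  refine eventually_mul_lt_of_le_step (hg.comp exp_monotone) hδ ?_ hab
  filter_upwards [hinc.eventually_const_lt hbL] with u hu
  have hsand := hlow (exp u) (exp (u + δ)) (exp_pos u) (exp_le_exp.2 (by linarith))
  simp only [exp_add_rpow, ← mul_assoc, ← exp_add, neg_add_cancel, exp_zero, one_mul] at hu
  linarith

theorem tendsto_comp_exp_div_of_tail {g G : ℝ → ℝ} {κ C : ℝ} (hg : Monotone g)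
    (hlow : ∀ s t, 0 < s → s ≤ t → s ^ κ * (G s - G t) ≤ g t - g s)
    (hup : ∀ s t, 0 < s → s ≤ t → g t - g s ≤ t ^ κ * (G s - G t))
    (htail : Tendsto (fun t => t ^ κ * G t) atTop (𝓝 C)) :
    Tendsto (fun u => g (exp u) / u) atTop (𝓝 (κ * C)) := by
  refine tendsto_order.2 ⟨fun a ha => ?_, fun a ha => ?_⟩
  · filter_upwards [eventually_mul_lt_of_tail hg hlow htail ha, eventually_gt_atTop 0]
      with u hu hu0
    exact (lt_div_iff₀ hu0).2 hu
  · filter_upwards [eventually_lt_mul_of_tail hg hup htail ha, eventually_gt_atTop 0]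
      with u hu hu0
    exact (div_lt_iff₀ hu0).2 hu

theorem tendsto_rpow_mul_of_tendsto_div {G : ℝ → ℝ} {κ C : ℝ} (hC : C ≠ 0)
    (h : Tendsto (fun t => G t / (C * t ^ (-κ))) atTop (𝓝 1)) :
    Tendsto (fun t => t ^ κ * G t) atTop (𝓝 C) := by
  refine (one_mul C ▸ h.mul_const C).congr' ?_
  filter_upwards [eventually_gt_atTop 0] with t ht
  have htκ := (rpow_pos_of_pos ht κ).ne'
  rw [rpow_neg ht.le]
  field_simp

theorem tendsto_div_mul_log_of_tendsto_comp_exp {g : ℝ → ℝ} {L : ℝ} (hL : L ≠ 0)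
    (h : Tendsto (fun u => g (exp u) / u) atTop (𝓝 L)) :
    Tendsto (fun t => g t / (L * log t)) atTop (𝓝 1) := by
  refine (div_self hL ▸ (h.comp tendsto_log_atTop).div_const L).congr' ?_
  filter_upwards [eventually_gt_atTop 0] with t ht
  simp only [Function.comp_apply, exp_log ht]
  ring

theorem eq_of_tendsto_div_mul_nhds_one {α : Type*} {l : Filter α} [l.NeBot] {f ℓ : α → ℝ}
    {a b : ℝ} (ha : Tendsto (fun x => f x / (a * ℓ x)) l (𝓝 1))
    (hb : Tendsto (fun x => f x / (b * ℓ x)) l (𝓝 1)) : a = b := by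
  have hne := (ha.eventually_ne one_ne_zero).and (hb.eventually_ne one_ne_zero)
  have hquot : ∀ᶠ x in l, f x / (a * ℓ x) / (f x / (b * ℓ x)) = b / a := by
    filter_upwards [hne] with x ⟨hxa, hxb⟩
    obtain ⟨hf, ha0, hℓ⟩ : f x ≠ 0 ∧ a ≠ 0 ∧ ℓ x ≠ 0 := by simpa [not_or] using hxa
    obtain ⟨-, hb0, -⟩ : f x ≠ 0 ∧ b ≠ 0 ∧ ℓ x ≠ 0 := by simpa [not_or] using hxb
    field_simp
  obtain ⟨x, hxa, -⟩ := hne.exists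
  have ha0 : a ≠ 0 := fun h => hxa (by simp [h])
  have hba : b / a = 1 := tendsto_nhds_unique
    (tendsto_const_nhds.congr' (hquot.mono fun _ => Eq.symm))
    (div_one (1 : ℝ) ▸ ha.div hb one_ne_zero)
  exact ((div_eq_one_iff_eq ha0).1 hba).symm

section TruncatedMoment

variable {Ω : Type*} [MeasurableSpace Ω] {μ : Measure Ω} [IsFiniteMeasure μ] {U : Ω → ℝ} {κ : ℝ}

theorem integrable_ite_le_rpow (hU : Measurable U) (hU0 : ∀ ω, 0 ≤ U ω) (hκ : 0 ≤ κ) (t : ℝ) :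
    Integrable (fun ω => if U ω ≤ t then U ω ^ κ else 0) μ := by
  refine (integrable_const (|t| ^ κ)).mono'
    ((hU.pow_const κ).ite (hU measurableSet_Iic) measurable_const).aestronglyMeasurable
    (Eventually.of_forall fun ω => ?_)
  split_ifs with h
  · rw [norm_of_nonneg (rpow_nonneg (hU0 ω) κ)]
    exact rpow_le_rpow (hU0 ω) (h.trans (le_abs_self t)) hκ
  · simp only [norm_zero]; positivity

theorem monotone_integral_ite_le_rpow (hU : Measurable U) (hU0 : ∀ ω, 0 ≤ U ω) (hκ : 0 ≤ κ) :
    Monotone fun t => ∫ ω, (if U ω ≤ t then U ω ^ κ else 0) ∂μ := by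
  intro s t hst
  refine integral_mono (integrable_ite_le_rpow hU hU0 hκ s)
    (integrable_ite_le_rpow hU hU0 hκ t) fun ω => ?_
  dsimp only
  split_ifs with hs ht
  · exact le_rfl
  · exact absurd (hs.trans hst) ht
  · exact rpow_nonneg (hU0 ω) κ
  · exact le_rfl

theorem integral_ite_le_rpow_sub (hU : Measurable U) (hU0 : ∀ ω, 0 ≤ U ω) (hκ : 0 ≤ κ)
    {s t : ℝ} (hst : s ≤ t) :
    (∫ ω, (if U ω ≤ t then U ω ^ κ else 0) ∂μ) - ∫ ω, (if U ω ≤ s then U ω ^ κ else 0) ∂μ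
      = ∫ ω in U ⁻¹' Set.Ioc s t, U ω ^ κ ∂μ := by
  rw [← integral_sub (integrable_ite_le_rpow hU hU0 hκ t) (integrable_ite_le_rpow hU hU0 hκ s),
    ← integral_indicator (hU measurableSet_Ioc)]
  congr 1
  ext ω
  simp only [Set.indicator, Set.mem_preimage, Set.mem_Ioc]
  split_ifs <;> grind

theorem measureReal_setOf_lt_sub (hU : Measurable U) {s t : ℝ} (hst : s ≤ t) :
    μ.real {ω | s < U ω} - μ.real {ω | t < U ω} = μ.real (U ⁻¹' Set.Ioc s t) := by
  rw [← measureReal_sdiff (s₁ := {ω | s < U ω}) (s₂ := {ω | t < U ω})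
    (fun ω h => hst.trans_lt h) (hU measurableSet_Ioi)]
  congr 1
  ext ω
  simp [not_lt]

theorem integral_ite_le_rpow_sub_mem_Icc (hU : Measurable U) (hU0 : ∀ ω, 0 ≤ U ω) (hκ : 0 ≤ κ)
    {s t : ℝ} (hs : 0 ≤ s) (hst : s ≤ t) :
    (∫ ω, (if U ω ≤ t then U ω ^ κ else 0) ∂μ) - ∫ ω, (if U ω ≤ s then U ω ^ κ else 0) ∂μ ∈
      Set.Icc (s ^ κ * (μ.real {ω | s < U ω} - μ.real {ω | t < U ω}))
        (t ^ κ * (μ.real {ω | s < U ω} - μ.real {ω | t < U ω})) := by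
  have hE : MeasurableSet (U ⁻¹' Set.Ioc s t) := hU measurableSet_Ioc
  rw [integral_ite_le_rpow_sub hU hU0 hκ hst, measureReal_setOf_lt_sub hU hst]
  constructor
  · refine setIntegral_ge_of_const_le_real hE (measure_ne_top _ _)
      (fun ω hω => rpow_le_rpow hs hω.1.le hκ) ?_
    exact (integrable_ite_le_rpow hU hU0 hκ t).integrableOn.congr_fun (fun ω hω => if_pos hω.2) hE
  · refine (Real.le_norm_self _).trans (norm_setIntegral_le_of_norm_le_const (measure_lt_top _ _)
      fun ω hω => ?_)
    rw [norm_of_nonneg (rpow_nonneg (hU0 ω) κ)]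
    exact rpow_le_rpow (hU0 ω) hω.2 hκ

theorem tendsto_integral_ite_le_rpow_div_log (hU : Measurable U) (hU0 : ∀ ω, 0 ≤ U ω)
    (hκ : 0 < κ) {C : ℝ} (hC : C ≠ 0)
    (htail : Tendsto (fun t => μ.real {ω | t < U ω} / (C * t ^ (-κ))) atTop (𝓝 1)) :
    Tendsto (fun t => (∫ ω, (if U ω ≤ t then U ω ^ κ else 0) ∂μ) / (κ * C * log t))
      atTop (𝓝 1) :=
  tendsto_div_mul_log_of_tendsto_comp_exp (mul_ne_zero hκ.ne' hC) <|
    tendsto_comp_exp_div_of_tail (monotone_integral_ite_le_rpow hU hU0 hκ.le)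
      (fun _ _ hs hst => (integral_ite_le_rpow_sub_mem_Icc hU hU0 hκ.le hs.le hst).1)
      (fun _ _ hs hst => (integral_ite_le_rpow_sub_mem_Icc hU hU0 hκ.le hs.le hst).2)
      (tendsto_rpow_mul_of_tendsto_div hC htail)

end TruncatedMoment

/-- If `P(U > t) ≍ C t^{-κ}` then `E[U^κ 1{U ≤ t}] ≍ κ C ln t`; consequently, for the
solution of the stochastic recurrence equation whose truncated `κ`-th moment satisfies
`E[U^κ 1{U ≤ t}] ≍ (E[(AU+B)^κ − (AU)^κ]/E[A^κ ln A]) ln t`, the Kesten constant is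
`C = E[(AU+B)^κ − (AU)^κ]/(κ E[A^κ ln A])`. -/
theorem kesten_constant_identification
    {Ω : Type*} [MeasurableSpace Ω] (μ : Measure Ω) [IsProbabilityMeasure μ]
    (U : Ω → ℝ) (κ C : ℝ)
    (hU : Measurable U) (hU0 : ∀ ω, 0 ≤ U ω)
    (hκ : 0 < κ) (hC : 0 < C)
    (htail : Filter.Tendsto
      (fun t : ℝ => (μ {ω | t < U ω}).toReal / (C * t ^ (-κ)))
      Filter.atTop (nhds 1)) :
    Filter.Tendsto
      (fun t : ℝ =>
        (∫ ω, (if U ω ≤ t then U ω ^ κ else 0) ∂μ) / (κ * C * Real.log t))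
      Filter.atTop (nhds 1) ∧
    ∀ A B : Ω → ℝ, Measurable A → Measurable B →
      (∀ ω, 0 ≤ A ω) → (∀ ω, 0 ≤ B ω) →
      μ {ω | A ω = 1} < 1 → μ {ω | B ω = 0} < 1 →
      Integrable (fun ω => A ω ^ κ) μ → (∫ ω, A ω ^ κ ∂μ) = 1 →
      Integrable (fun ω => B ω ^ κ) μ →
      IndepFun U (fun ω => (A ω, B ω)) μ →
      Measure.map U μ = Measure.map (fun ω => A ω * U ω + B ω) μ →
      Filter.Tendsto
        (fun t : ℝ =>
          (∫ ω, (if U ω ≤ t then U ω ^ κ else 0) ∂μ) /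
            ((∫ ω, ((A ω * U ω + B ω) ^ κ - (A ω * U ω) ^ κ) ∂μ) /
              (∫ ω, A ω ^ κ * Real.log (A ω) ∂μ) * Real.log t))
        Filter.atTop (nhds 1) →
      C = (∫ ω, ((A ω * U ω + B ω) ^ κ - (A ω * U ω) ^ κ) ∂μ) /
            (κ * ∫ ω, A ω ^ κ * Real.log (A ω) ∂μ) := by
  have hmoment := tendsto_integral_ite_le_rpow_div_log hU hU0 hκ hC.ne' htail
  refine ⟨hmoment, fun A B _ _ _ _ _ _ _ _ _ _ _ hrecurrence => ?_⟩
  have hκC := eq_of_tendsto_div_mul_nhds_one hmoment hrecurrence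
  rw [mul_comm κ, ← div_div, ← hκC, mul_div_cancel_left₀ _ hκ.ne']
end

section
/- Let (A,B) be a random vector with nonnegative coordinates satisfying P(A=1)<1, P(B=0)<1, E A^κ = 1 and E B^κ < ∞ for some κ>0. Then: (i) E A^p < 1 for every p ∈ (0,κ); (ii) E[A^κ ln A] ∈ (0, +∞] (i.e., the expectation, which is well defined since E[A^κ ln⁻ A] < ∞, is strictly positive, possibly infinite); and (iii) the unique-in-law solution U of U =_d A U + B (with U independent of (A,B)) satisfies E U^p < +∞ for every p ∈ (0,κ). -/
/-!
(i) is strict Jensen's inequality for the concave map `x ↦ x ^ (p / κ)` applied to `A ^ κ`,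
which has mean `1` and is not a.s. constant.

(ii) `x ^ κ ln⁻ x ≤ κ⁻¹` gives the integrability, and integrating
`x ^ κ (1 - (κ / 2) ln x) ≤ x ^ (κ / 2)` gives `1 - (κ / 2) E[A ^ κ ln A] ≤ E A ^ (κ / 2) < 1`.

(iii) Iterating the fixed-point equation, `U` has the law of `Πₖ U' + Sₖ`, where
`Πₖ = A₁ ⋯ Aₖ`, `Sₖ` is the `k`-th partial sum of the perpetuity and `U' ∼ U`. Measured by
`‖·‖_p ^ min p 1`, which is subadditive for every `p > 0`, `Sₖ` is bounded uniformly in `k`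
because `E A ^ p < 1`. For a truncation level `N`,
`E min (Πₖ U', N) ^ p ≤ M ^ p (E A ^ p) ^ k + N ^ p P(U > M)` is at most `2` once `M` and then
`k` are large, so `E min (U, N) ^ p` is bounded uniformly in `N`.
-/

open MeasureTheory ProbabilityTheory Filter Topology
open scoped ENNReal

theorem Real.rpow_mul_negPart_log_le_inv {x κ : ℝ} (hx : 0 ≤ x) (hκ : 0 < κ) :
    x ^ κ * max (-Real.log x) 0 ≤ κ⁻¹ := by
  rcases hx.eq_or_lt with rfl | hx
  · simp [Real.zero_rpow hκ.ne', hκ.le]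
  rcases le_or_gt 1 x with h1 | h1
  · simp [max_eq_right (neg_nonpos.2 (Real.log_nonneg h1)), hκ.le]
  have hy : 0 < x ^ κ := Real.rpow_pos_of_pos hx κ
  have hlog := Real.abs_log_mul_self_lt (x ^ κ) hy (Real.rpow_le_one hx.le h1.le hκ.le)
  rw [Real.log_rpow hx, abs_lt] at hlog
  rw [max_eq_left (neg_nonneg.2 (Real.log_nonpos hx.le h1.le)), ← one_div, le_div_iff₀' hκ]
  linarith [hlog.1]

theorem Real.rpow_sub_mul_rpow_mul_log_le {x κ : ℝ} (hx : 0 ≤ x) (hκ : 0 < κ) :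
    x ^ κ - κ / 2 * (x ^ κ * Real.log x) ≤ x ^ (κ / 2) := by
  rcases hx.eq_or_lt with rfl | hx
  · simp [Real.zero_rpow hκ.ne', Real.zero_rpow (half_pos hκ).ne']
  have hexp : 1 - κ / 2 * Real.log x ≤ x ^ (-(κ / 2)) := by
    rw [Real.rpow_def_of_pos hx]
    linarith [Real.add_one_le_exp (Real.log x * -(κ / 2))]
  calc x ^ κ - κ / 2 * (x ^ κ * Real.log x) = x ^ κ * (1 - κ / 2 * Real.log x) := by ring
    _ ≤ x ^ κ * x ^ (-(κ / 2)) := by gcongr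
    _ = x ^ (κ / 2) := by rw [← Real.rpow_add hx]; ring_nf

section Moments

variable {Ω : Type*} [MeasurableSpace Ω] {μ : Measure Ω} {A : Ω → ℝ} {κ p : ℝ}

theorem integrable_rpow_of_le [IsFiniteMeasure μ] (hA : AEStronglyMeasurable A μ)
    (hA0 : ∀ ω, 0 ≤ A ω) (hp : 0 ≤ p) (hpκ : p ≤ κ) (hκ : Integrable (fun ω => A ω ^ κ) μ) :
    Integrable (fun ω => A ω ^ p) μ := by
  have hnorm : ∀ q : ℝ, (fun ω => ‖A ω‖ ^ q) = fun ω => A ω ^ q := fun q => by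
    simp only [Real.norm_of_nonneg (hA0 _)]
  rw [← hnorm] at hκ ⊢
  exact integrable_norm_rpow_of_le hA hp (hp.trans hpκ) hpκ hκ

theorem integral_rpow_lt_one [IsProbabilityMeasure μ] (hA : Measurable A) (hA0 : ∀ ω, 0 ≤ A ω)
    (hAne1 : μ {ω | A ω = 1} < 1) (hκint : Integrable (fun ω => A ω ^ κ) μ)
    (hκ1 : ∫ ω, A ω ^ κ ∂μ = 1) (hp : 0 < p) (hpκ : p < κ)
    (hpint : Integrable (fun ω => A ω ^ p) μ) :
    ∫ ω, A ω ^ p ∂μ < 1 := by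
  have hκ : 0 < κ := hp.trans hpκ
  have hcomp : (fun ω => (A ω ^ κ) ^ (p / κ)) = fun ω => A ω ^ p := by
    ext ω
    rw [← Real.rpow_mul (hA0 ω), mul_div_cancel₀ _ hκ.ne']
  have jensen := (Real.strictConcaveOn_rpow (div_pos hp hκ) ((div_lt_one hκ).2 hpκ))
    |>.ae_eq_const_or_lt_map_average (μ := μ) (f := fun ω => A ω ^ κ)
      (Real.continuous_rpow_const (div_pos hp hκ).le).continuousOn isClosed_Ici
      (ae_of_all _ fun ω => Real.rpow_nonneg (hA0 ω) κ) hκint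
      (by simpa only [Function.comp_def, hcomp] using hpint)
  simp only [average_eq_integral, hκ1, hcomp, Real.one_rpow] at jensen
  refine jensen.resolve_left fun hconst => hAne1.ne ?_
  rw [← measure_univ (μ := μ),
    ← ae_iff_measure_eq (measurableSet_eq_fun hA measurable_const).nullMeasurableSet]
  filter_upwards [hconst] with ω hω
  exact (Real.rpow_left_injOn hκ.ne').eq_iff (hA0 ω) (by norm_num) |>.1
    (hω.trans (Real.one_rpow κ).symm)

theorem integrable_rpow_mul_negPart_log [IsFiniteMeasure μ] (hA : Measurable A)
    (hA0 : ∀ ω, 0 ≤ A ω) (hκ : 0 < κ) :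
    Integrable (fun ω => A ω ^ κ * max (-Real.log (A ω)) 0) μ := by
  refine (integrable_const κ⁻¹).mono' (by fun_prop) (ae_of_all _ fun ω => ?_)
  rw [Real.norm_of_nonneg (by have := Real.rpow_nonneg (hA0 ω) κ; positivity)]
  exact Real.rpow_mul_negPart_log_le_inv (hA0 ω) hκ

theorem integral_rpow_mul_log_pos (hA0 : ∀ ω, 0 ≤ A ω) (hκ : 0 < κ)
    (hκint : Integrable (fun ω => A ω ^ κ) μ) (hκ1 : ∫ ω, A ω ^ κ ∂μ = 1)
    (hhalfint : Integrable (fun ω => A ω ^ (κ / 2)) μ) (hhalf : ∫ ω, A ω ^ (κ / 2) ∂μ < 1)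
    (hlog : Integrable (fun ω => A ω ^ κ * Real.log (A ω)) μ) :
    0 < ∫ ω, A ω ^ κ * Real.log (A ω) ∂μ := by
  have key := integral_mono (hκint.sub (hlog.const_mul (κ / 2))) hhalfint
    fun ω => Real.rpow_sub_mul_rpow_mul_log_le (hA0 ω) hκ
  rw [Pi.sub_def, integral_sub hκint (hlog.const_mul _), integral_const_mul, hκ1] at key
  nlinarith

end Moments

/-- `‖f‖_p ^ min p 1`, which unlike `‖f‖_p` is subadditive also for `p < 1`. -/
noncomputable def momentNorm {α : Type*} [MeasurableSpace α] (p : ℝ) (μ : Measure α)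
    (f : α → ℝ≥0∞) : ℝ≥0∞ :=
  (∫⁻ x, f x ^ p ∂μ) ^ (min p 1 / p)

namespace momentNorm

variable {α β : Type*} [MeasurableSpace α] [MeasurableSpace β] {p : ℝ} {μ : Measure α}
  {f g : α → ℝ≥0∞}

theorem exponent_pos (hp : 0 < p) : 0 < min p 1 / p := div_pos (lt_min hp one_pos) hp

theorem ne_top_iff (hp : 0 < p) : momentNorm p μ f ≠ ⊤ ↔ ∫⁻ x, f x ^ p ∂μ ≠ ⊤ :=
  (ENNReal.rpow_eq_top_iff_of_pos (exponent_pos hp)).not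

theorem mono (hp : 0 < p) (hfg : ∀ x, f x ≤ g x) : momentNorm p μ f ≤ momentNorm p μ g :=
  ENNReal.rpow_le_rpow (lintegral_mono fun x => ENNReal.rpow_le_rpow (hfg x) hp.le)
    (exponent_pos hp).le

theorem add_le (hp : 0 < p) (hf : AEMeasurable f μ) (hg : AEMeasurable g μ) :
    momentNorm p μ (fun x => f x + g x) ≤ momentNorm p μ f + momentNorm p μ g := by
  rcases le_total p 1 with hp1 | hp1
  · simp only [momentNorm, min_eq_left hp1, div_self hp.ne', ENNReal.rpow_one]
    rw [← lintegral_add_left' (hf.pow_const p)]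
    exact lintegral_mono fun x => ENNReal.rpow_add_le_add_rpow _ _ hp.le hp1
  · simp only [momentNorm, min_eq_right hp1]
    exact ENNReal.lintegral_Lp_add_le hf hg hp1

theorem map {γ : Type*} [MeasurableSpace γ] {φ : α → γ} (hφ : Measurable φ) {h : γ → ℝ≥0∞}
    (hh : Measurable h) : momentNorm p (μ.map φ) h = momentNorm p μ (h ∘ φ) := by
  rw [momentNorm, lintegral_map (hh.pow_const p) hφ, momentNorm]
  rfl

theorem prod_mul (hp : 0 < p) {ν : Measure β} [SFinite ν] {g : β → ℝ≥0∞}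
    (hf : AEMeasurable f μ) (hg : AEMeasurable g ν) :
    momentNorm p (μ.prod ν) (fun z => f z.1 * g z.2) = momentNorm p μ f * momentNorm p ν g := by
  simp only [momentNorm, ENNReal.mul_rpow_of_nonneg _ _ hp.le]
  rw [lintegral_prod_mul (hf.pow_const p) (hg.pow_const p),
    ENNReal.mul_rpow_of_nonneg _ _ (exponent_pos hp).le]

end momentNorm

theorem ENNReal.mul_add_eq_div_one_sub {r β : ℝ≥0∞} (hr : r < 1) :
    r * (β / (1 - r)) + β = β / (1 - r) := by
  calc r * (β / (1 - r)) + β = r * (β / (1 - r)) + (1 - r) * (β / (1 - r)) := by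
        rw [ENNReal.mul_div_cancel (tsub_pos_of_lt hr).ne' (ENNReal.sub_ne_top ENNReal.one_ne_top)]
    _ = β / (1 - r) := by rw [← add_mul, add_tsub_cancel_of_le hr.le, one_mul]

theorem MeasureTheory.tendsto_measure_Ioi_natCast {ν : Measure ℝ≥0∞} [IsFiniteMeasure ν]
    (hν : ν {⊤} = 0) : Tendsto (fun n : ℕ => ν (Set.Ioi (n : ℝ≥0∞))) atTop (𝓝 0) := by
  rw [← hν, ← ENNReal.iInter_Ioi_coe_nat]
  exact tendsto_measure_iInter_atTop (fun _ => measurableSet_Ioi.nullMeasurableSet)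
    (fun _ _ hij => Set.Ioi_subset_Ioi (Nat.cast_le.2 hij)) ⟨0, measure_ne_top ν _⟩

theorem ENNReal.min_mul_rpow_le {a u N M : ℝ≥0∞} {p : ℝ} (hp : 0 ≤ p) :
    min (a * u) N ^ p ≤ M ^ p * a ^ p + (Set.Ioi M).indicator (fun _ => N ^ p) u := by
  by_cases hu : u ∈ Set.Ioi M
  · rw [Set.indicator_of_mem hu]
    exact (ENNReal.rpow_le_rpow (min_le_right _ _) hp).trans le_add_self
  · rw [Set.indicator_of_notMem hu, add_zero, ← ENNReal.mul_rpow_of_nonneg _ _ hp, mul_comm]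
    exact ENNReal.rpow_le_rpow ((min_le_left _ _).trans (by gcongr; exact not_lt.1 hu)) hp

/-- If `U ∼ ν` and `(Aⱼ, Bⱼ) ∼ ρ` are independent, `perpetuityLaw ν ρ k` is the law of
`(A₁ ⋯ Aₖ, ∑_{j ≤ k} A₁ ⋯ Aⱼ₋₁ Bⱼ, U)`; each step inserts the new pair in front. -/
noncomputable def perpetuityLaw (ν : Measure ℝ≥0∞) (ρ : Measure (ℝ≥0∞ × ℝ≥0∞)) :
    ℕ → Measure (ℝ≥0∞ × ℝ≥0∞ × ℝ≥0∞)
  | 0 => ν.map fun u => (1, 0, u)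
  | k + 1 => ((perpetuityLaw ν ρ k).prod ρ).map
      fun z => (z.2.1 * z.1.1, z.2.1 * z.1.2.1 + z.2.2, z.1.2.2)

namespace perpetuityLaw

variable {ν : Measure ℝ≥0∞} {ρ : Measure (ℝ≥0∞ × ℝ≥0∞)} [IsProbabilityMeasure ρ] {p : ℝ}

instance [IsProbabilityMeasure ν] (k : ℕ) : IsProbabilityMeasure (perpetuityLaw ν ρ k) := by
  induction k with
  | zero => exact Measure.isProbabilityMeasure_map (by fun_prop)
  | succ k _ => exact Measure.isProbabilityMeasure_map (by fun_prop)

theorem map_mul_add_eq [IsProbabilityMeasure ν]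
    (hfix : (ν.prod ρ).map (fun z => z.2.1 * z.1 + z.2.2) = ν) (k : ℕ) :
    (perpetuityLaw ν ρ k).map (fun q => q.1 * q.2.2 + q.2.1) = ν := by
  induction k with
  | zero =>
    rw [perpetuityLaw, Measure.map_map (by fun_prop) (by fun_prop)]
    simp [Function.comp_def]
  | succ k ih =>
    have hcomp : (fun q : ℝ≥0∞ × ℝ≥0∞ × ℝ≥0∞ => q.1 * q.2.2 + q.2.1) ∘
        (fun z : (ℝ≥0∞ × ℝ≥0∞ × ℝ≥0∞) × (ℝ≥0∞ × ℝ≥0∞) =>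
          (z.2.1 * z.1.1, z.2.1 * z.1.2.1 + z.2.2, z.1.2.2)) =
        (fun z : ℝ≥0∞ × ℝ≥0∞ × ℝ≥0∞ => z.2.1 * z.1 + z.2.2) ∘
          Prod.map (fun q : ℝ≥0∞ × ℝ≥0∞ × ℝ≥0∞ => q.1 * q.2.2 + q.2.1) id := by
      ext z
      simp only [Function.comp_apply, Prod.map, id]
      ring
    rw [perpetuityLaw, Measure.map_map (by fun_prop) (by fun_prop), hcomp,
      ← Measure.map_map (by fun_prop) (by fun_prop),
      ← Measure.map_prod_map _ _ (by fun_prop) measurable_id, Measure.map_id, ih, hfix]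

theorem map_snd_snd (k : ℕ) : (perpetuityLaw ν ρ k).map (fun q => q.2.2) = ν := by
  induction k with
  | zero =>
    rw [perpetuityLaw, Measure.map_map (by fun_prop) (by fun_prop)]
    exact Measure.map_id
  | succ k ih =>
    rw [perpetuityLaw, Measure.map_map (by fun_prop) (by fun_prop)]
    change ((perpetuityLaw ν ρ k).prod ρ).map ((fun q => q.2.2) ∘ Prod.fst) = ν
    rw [← Measure.map_map (by fun_prop) measurable_fst, Measure.map_fst_prod, measure_univ,
      one_smul, ih]

theorem lintegral_fst_rpow [IsProbabilityMeasure ν] (hp : 0 ≤ p) (k : ℕ) :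
    ∫⁻ q, q.1 ^ p ∂perpetuityLaw ν ρ k = (∫⁻ y, y.1 ^ p ∂ρ) ^ k := by
  induction k with
  | zero =>
    rw [perpetuityLaw, lintegral_map (by fun_prop) (by fun_prop)]
    simp
  | succ k ih =>
    rw [perpetuityLaw, lintegral_map (by fun_prop) (by fun_prop)]
    have hmul : ∀ z : (ℝ≥0∞ × ℝ≥0∞ × ℝ≥0∞) × (ℝ≥0∞ × ℝ≥0∞),
        (z.2.1 * z.1.1) ^ p = z.1.1 ^ p * z.2.1 ^ p := fun z => by
      rw [ENNReal.mul_rpow_of_nonneg _ _ hp, mul_comm]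
    simp_rw [hmul]
    rw [lintegral_prod_mul (f := fun q : ℝ≥0∞ × ℝ≥0∞ × ℝ≥0∞ => q.1 ^ p)
      (g := fun y : ℝ≥0∞ × ℝ≥0∞ => y.1 ^ p) (by fun_prop) (by fun_prop), ih, pow_succ]

theorem momentNorm_snd_fst_le [IsProbabilityMeasure ν] (hp : 0 < p)
    (hr : momentNorm p ρ Prod.fst < 1) (k : ℕ) :
    momentNorm p (perpetuityLaw ν ρ k) (fun q => q.2.1) ≤
      momentNorm p ρ Prod.snd / (1 - momentNorm p ρ Prod.fst) := by
  induction k with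
  | zero =>
    rw [perpetuityLaw, momentNorm.map (by fun_prop) (by fun_prop)]
    simp [momentNorm, ENNReal.zero_rpow_of_pos hp, ENNReal.zero_rpow_of_pos
      (momentNorm.exponent_pos hp)]
  | succ k ih =>
    rw [perpetuityLaw, momentNorm.map (by fun_prop) (by fun_prop)]
    have hsnd : momentNorm p ((perpetuityLaw ν ρ k).prod ρ) (fun z => z.2.2) =
        momentNorm p ρ Prod.snd := by
      have hmap : ((perpetuityLaw ν ρ k).prod ρ).map Prod.snd = ρ := by
        rw [Measure.map_snd_prod, measure_univ, one_smul]
      conv_rhs => rw [← hmap, momentNorm.map measurable_snd measurable_snd]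
      rfl
    calc _ ≤ momentNorm p ((perpetuityLaw ν ρ k).prod ρ) (fun z => z.2.1 * z.1.2.1) +
          momentNorm p ((perpetuityLaw ν ρ k).prod ρ) (fun z => z.2.2) :=
          momentNorm.add_le hp (by fun_prop) (by fun_prop)
      _ = momentNorm p ρ Prod.fst * momentNorm p (perpetuityLaw ν ρ k) (fun q => q.2.1) +
          momentNorm p ρ Prod.snd := by
          rw [hsnd, mul_comm (momentNorm p ρ Prod.fst), ← momentNorm.prod_mul hp (by fun_prop)
            (by fun_prop)]
          simp_rw [mul_comm]
      _ ≤ _ := by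
          grw [ih]
          exact (ENNReal.mul_add_eq_div_one_sub hr).le

theorem exists_lintegral_min_mul_rpow_le_two [IsProbabilityMeasure ν] (hν : ν {⊤} = 0)
    (hp : 0 < p) (hr : ∫⁻ y, y.1 ^ p ∂ρ < 1) {N : ℝ≥0∞} (hN : N ≠ ⊤) :
    ∃ k, ∫⁻ q, min (q.1 * q.2.2) N ^ p ∂perpetuityLaw ν ρ k ≤ 2 := by
  have hNp : N ^ p ≠ ⊤ := ENNReal.rpow_ne_top_of_nonneg hp.le hN
  obtain ⟨M, hM⟩ := ((ENNReal.Tendsto.const_mul (tendsto_measure_Ioi_natCast hν)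
    (Or.inr hNp)).eventually_le_const (show N ^ p * 0 < 1 by simp)).exists
  have hMp : (M : ℝ≥0∞) ^ p ≠ ⊤ := ENNReal.rpow_ne_top_of_nonneg hp.le (ENNReal.natCast_ne_top M)
  obtain ⟨k, hk⟩ := ((ENNReal.Tendsto.const_mul (ENNReal.tendsto_pow_atTop_nhds_zero_of_lt_one hr)
    (Or.inr hMp)).eventually_le_const (show (M : ℝ≥0∞) ^ p * 0 < 1 by simp)).exists
  have hind : Measurable ((Set.Ioi (M : ℝ≥0∞)).indicator fun _ => N ^ p) :=
    measurable_const.indicator measurableSet_Ioi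
  have htail : ∫⁻ q, (Set.Ioi (M : ℝ≥0∞)).indicator (fun _ => N ^ p) q.2.2
      ∂perpetuityLaw ν ρ k = N ^ p * ν (Set.Ioi (M : ℝ≥0∞)) := by
    rw [← lintegral_map hind (by fun_prop), map_snd_snd,
      lintegral_indicator_const measurableSet_Ioi]
  refine ⟨k, ?_⟩
  calc ∫⁻ q, min (q.1 * q.2.2) N ^ p ∂perpetuityLaw ν ρ k
      ≤ ∫⁻ q, ((M : ℝ≥0∞) ^ p * q.1 ^ p + (Set.Ioi (M : ℝ≥0∞)).indicator (fun _ => N ^ p) q.2.2)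
          ∂perpetuityLaw ν ρ k := lintegral_mono fun q => ENNReal.min_mul_rpow_le hp.le
    _ = (M : ℝ≥0∞) ^ p * (∫⁻ y, y.1 ^ p ∂ρ) ^ k + N ^ p * ν (Set.Ioi (M : ℝ≥0∞)) := by
      rw [lintegral_add_left (by fun_prop), lintegral_const_mul _ (by fun_prop),
        lintegral_fst_rpow hp.le, htail]
    _ ≤ 1 + 1 := add_le_add hk hM
    _ = 2 := one_add_one_eq_two

end perpetuityLaw

section AffineFixedPoint

variable {ν : Measure ℝ≥0∞} {ρ : Measure (ℝ≥0∞ × ℝ≥0∞)} [IsProbabilityMeasure ν]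
  [IsProbabilityMeasure ρ] {p : ℝ}

theorem momentNorm_min_le_of_map_affine_eq
    (hfix : (ν.prod ρ).map (fun z => z.2.1 * z.1 + z.2.2) = ν) (hν : ν {⊤} = 0) (hp : 0 < p)
    (hr : ∫⁻ y, y.1 ^ p ∂ρ < 1) {N : ℝ≥0∞} (hN : N ≠ ⊤) :
    momentNorm p ν (fun x => min x N) ≤
      2 ^ (min p 1 / p) + momentNorm p ρ Prod.snd / (1 - momentNorm p ρ Prod.fst) := by
  obtain ⟨k, hk⟩ := perpetuityLaw.exists_lintegral_min_mul_rpow_le_two hν hp hr hN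
  rw [← perpetuityLaw.map_mul_add_eq hfix k, momentNorm.map (by fun_prop) (by fun_prop)]
  calc _ ≤ momentNorm p (perpetuityLaw ν ρ k) (fun q => min (q.1 * q.2.2) N + q.2.1) :=
        momentNorm.mono hp fun q =>
          (min_le_min_left _ le_self_add).trans (min_add_add_right _ _ _).le
    _ ≤ momentNorm p (perpetuityLaw ν ρ k) (fun q => min (q.1 * q.2.2) N) +
        momentNorm p (perpetuityLaw ν ρ k) (fun q => q.2.1) :=
        momentNorm.add_le hp (by fun_prop) (by fun_prop)
    _ ≤ _ := add_le_add (ENNReal.rpow_le_rpow hk (momentNorm.exponent_pos hp).le)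
        (perpetuityLaw.momentNorm_snd_fst_le hp
          (ENNReal.rpow_lt_one hr (momentNorm.exponent_pos hp)) k)

theorem lintegral_rpow_ne_top_of_map_affine_eq
    (hfix : (ν.prod ρ).map (fun z => z.2.1 * z.1 + z.2.2) = ν) (hν : ν {⊤} = 0) (hp : 0 < p)
    (hr : ∫⁻ y, y.1 ^ p ∂ρ < 1) (hβ : ∫⁻ y, y.2 ^ p ∂ρ ≠ ⊤) :
    ∫⁻ x, x ^ p ∂ν ≠ ⊤ := by
  have hbound : 2 ^ (min p 1 / p) + momentNorm p ρ Prod.snd / (1 - momentNorm p ρ Prod.fst) ≠ ⊤ :=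
    ENNReal.add_ne_top.2 ⟨ENNReal.rpow_ne_top_of_nonneg (momentNorm.exponent_pos hp).le
      ENNReal.ofNat_ne_top, ENNReal.div_ne_top ((momentNorm.ne_top_iff hp).2 hβ)
      (tsub_pos_of_lt (ENNReal.rpow_lt_one hr (momentNorm.exponent_pos hp))).ne'⟩
  have htrunc : ∀ x : ℝ≥0∞, Tendsto (fun n : ℕ => min x n ^ p) atTop (𝓝 (x ^ p)) := fun x => by
    simpa [Function.comp_def] using (ENNReal.continuous_rpow_const.tendsto _).comp
      (((continuous_const.min continuous_id).tendsto ⊤).comp ENNReal.tendsto_nat_nhds_top)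
  have hlim : Tendsto (fun n : ℕ => momentNorm p ν fun x => min x n) atTop
      (𝓝 (momentNorm p ν id)) :=
    (ENNReal.continuous_rpow_const.tendsto _).comp <|
      lintegral_tendsto_of_tendsto_of_monotone (fun n => by fun_prop)
        (ae_of_all _ fun x i j hij => ENNReal.rpow_le_rpow
          (min_le_min_left _ (Nat.cast_le.2 hij)) hp.le) (ae_of_all _ htrunc)
  exact (momentNorm.ne_top_iff hp).1 <| ne_top_of_le_ne_top hbound <| le_of_tendsto' hlim
    fun n => momentNorm_min_le_of_map_affine_eq hfix hν hp hr (ENNReal.natCast_ne_top n)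

end AffineFixedPoint

section RealValued

variable {Ω : Type*} [MeasurableSpace Ω] {μ : Measure Ω} {f : Ω → ℝ} {p : ℝ}

theorem lintegral_ofReal_rpow (hf0 : 0 ≤ᵐ[μ] f) (hp : 0 ≤ p) :
    ∫⁻ ω, ENNReal.ofReal (f ω) ^ p ∂μ = ∫⁻ ω, ENNReal.ofReal (f ω ^ p) ∂μ :=
  lintegral_congr_ae <| hf0.mono fun _ h => ENNReal.ofReal_rpow_of_nonneg h hp

theorem integrable_rpow_iff_lintegral_ofReal_rpow_ne_top (hf : AEStronglyMeasurable f μ)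
    (hf0 : 0 ≤ᵐ[μ] f) (hp : 0 ≤ p) :
    Integrable (fun ω => f ω ^ p) μ ↔ ∫⁻ ω, ENNReal.ofReal (f ω) ^ p ∂μ ≠ ⊤ := by
  rw [lintegral_ofReal_rpow hf0 hp, ← lt_top_iff_ne_top, ← hasFiniteIntegral_iff_ofReal
    (hf0.mono fun _ h => Real.rpow_nonneg h p)]
  exact ⟨fun h => h.2, fun h => ⟨(Real.continuous_rpow_const hp).comp_aestronglyMeasurable hf, h⟩⟩

theorem lintegral_ofReal_rpow_eq_ofReal_integral (hf0 : 0 ≤ᵐ[μ] f) (hp : 0 ≤ p)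
    (hint : Integrable (fun ω => f ω ^ p) μ) :
    ∫⁻ ω, ENNReal.ofReal (f ω) ^ p ∂μ = ENNReal.ofReal (∫ ω, f ω ^ p ∂μ) := by
  rw [lintegral_ofReal_rpow hf0 hp, ofReal_integral_eq_lintegral_ofReal hint
    (hf0.mono fun _ h => Real.rpow_nonneg h p)]

end RealValued

theorem integrable_rpow_of_map_eq_affine {Ω : Type*} [MeasurableSpace Ω] {μ : Measure Ω}
    [IsProbabilityMeasure μ] {A B U : Ω → ℝ} (hA : Measurable A) (hB : Measurable B)
    (hU : Measurable U) (hA0 : 0 ≤ᵐ[μ] A) (hB0 : 0 ≤ᵐ[μ] B) (hU0 : 0 ≤ᵐ[μ] U)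
    (hindep : IndepFun U (fun ω => (A ω, B ω)) μ)
    (hfix : μ.map U = μ.map (fun ω => A ω * U ω + B ω)) {p : ℝ} (hp : 0 < p)
    (hAint : Integrable (fun ω => A ω ^ p) μ) (hA1 : ∫ ω, A ω ^ p ∂μ < 1)
    (hBint : Integrable (fun ω => B ω ^ p) μ) :
    Integrable (fun ω => U ω ^ p) μ := by
  set V : Ω → ℝ≥0∞ := fun ω => ENNReal.ofReal (U ω)
  set AB : Ω → ℝ≥0∞ × ℝ≥0∞ := fun ω => (ENNReal.ofReal (A ω), ENNReal.ofReal (B ω))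
  have hV : Measurable V := by fun_prop
  have hAB : Measurable AB := by fun_prop
  have : IsProbabilityMeasure (μ.map V) := Measure.isProbabilityMeasure_map hV.aemeasurable
  have : IsProbabilityMeasure (μ.map AB) := Measure.isProbabilityMeasure_map hAB.aemeasurable
  have hjoint : μ.map (fun ω => (V ω, AB ω)) = (μ.map V).prod (μ.map AB) :=
    (indepFun_iff_map_prod_eq_prod_map_map hV.aemeasurable hAB.aemeasurable).1 <|
      hindep.comp (ψ := fun x : ℝ × ℝ => (ENNReal.ofReal x.1, ENNReal.ofReal x.2))
        ENNReal.measurable_ofReal (by fun_prop)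
  have hfix' : ((μ.map V).prod (μ.map AB)).map (fun z => z.2.1 * z.1 + z.2.2) = μ.map V := by
    rw [← hjoint, Measure.map_map (by fun_prop) (by fun_prop)]
    calc _ = μ.map (ENNReal.ofReal ∘ fun ω => A ω * U ω + B ω) := by
          refine Measure.map_congr ?_
          filter_upwards [hA0, hB0, hU0] with ω hAω hBω hUω
          simp [V, AB, ENNReal.ofReal_add (mul_nonneg hAω hUω) hBω, ENNReal.ofReal_mul hAω]
      _ = μ.map V := by
          rw [← Measure.map_map ENNReal.measurable_ofReal (by fun_prop), ← hfix,
            Measure.map_map ENNReal.measurable_ofReal hU]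
          rfl
  have htop : μ.map V {⊤} = 0 := by
    rw [Measure.map_apply hV (measurableSet_singleton ⊤)]
    simp [V, Set.preimage]
  have hr : ∫⁻ y, y.1 ^ p ∂μ.map AB < 1 := by
    rw [lintegral_map (by fun_prop) hAB, lintegral_ofReal_rpow_eq_ofReal_integral hA0 hp.le hAint]
    exact ENNReal.ofReal_lt_one.2 hA1
  have hβ : ∫⁻ y, y.2 ^ p ∂μ.map AB ≠ ⊤ := by
    rw [lintegral_map (by fun_prop) hAB, lintegral_ofReal_rpow_eq_ofReal_integral hB0 hp.le hBint]
    exact ENNReal.ofReal_ne_top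
  have hU_moment := lintegral_rpow_ne_top_of_map_affine_eq hfix' htop hp hr hβ
  rw [lintegral_map (by fun_prop) hV] at hU_moment
  exact (integrable_rpow_iff_lintegral_ofReal_rpow_ne_top hU.aestronglyMeasurable hU0 hp.le).2
    hU_moment

theorem nondegeneracy_consequences_general
    {Ω : Type*} [MeasurableSpace Ω] (μ : Measure Ω) [IsProbabilityMeasure μ]
    (A B U : Ω → ℝ) (κ : ℝ)
    (hA : Measurable A) (hB : Measurable B) (hU : Measurable U)
    (hA0 : ∀ ω, 0 ≤ A ω) (hB0 : ∀ ω, 0 ≤ B ω) (hU0 : ∀ᵐ ω ∂μ, 0 ≤ U ω)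
    (hκ : 0 < κ)
    (hAne1 : μ {ω | A ω = 1} < 1)
    (hAκint : Integrable (fun ω => A ω ^ κ) μ)
    (hAκ : ∫ ω, A ω ^ κ ∂μ = 1)
    (hBκ : Integrable (fun ω => B ω ^ κ) μ)
    (hindep : IndepFun U (fun ω => (A ω, B ω)) μ)
    (hfix : Measure.map U μ = Measure.map (fun ω => A ω * U ω + B ω) μ) :
    (∀ p : ℝ, p ∈ Set.Ioo 0 κ →
      Integrable (fun ω => A ω ^ p) μ ∧ (∫ ω, A ω ^ p ∂μ) < 1) ∧
    (Integrable (fun ω => A ω ^ κ * max (-Real.log (A ω)) 0) μ ∧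
      (¬ Integrable (fun ω => A ω ^ κ * Real.log (A ω)) μ ∨
        0 < ∫ ω, A ω ^ κ * Real.log (A ω) ∂μ)) ∧
    (∀ p : ℝ, p ∈ Set.Ioo 0 κ → Integrable (fun ω => U ω ^ p) μ) := by
  have hAp : ∀ p ∈ Set.Ioo 0 κ, Integrable (fun ω => A ω ^ p) μ := fun p hp =>
    integrable_rpow_of_le hA.aestronglyMeasurable hA0 hp.1.le hp.2.le hAκint
  have hAp1 : ∀ p ∈ Set.Ioo 0 κ, ∫ ω, A ω ^ p ∂μ < 1 := fun p hp =>
    integral_rpow_lt_one hA hA0 hAne1 hAκint hAκ hp.1 hp.2 (hAp p hp)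
  have hhalf : κ / 2 ∈ Set.Ioo 0 κ := ⟨half_pos hκ, half_lt_self hκ⟩
  refine ⟨fun p hp => ⟨hAp p hp, hAp1 p hp⟩, ⟨integrable_rpow_mul_negPart_log hA hA0 hκ, ?_⟩,
    fun p hp => ?_⟩
  · exact or_iff_not_imp_left.2 fun hlog => integral_rpow_mul_log_pos hA0 hκ hAκint hAκ
      (hAp _ hhalf) (hAp1 _ hhalf) (not_not.1 hlog)
  · exact integrable_rpow_of_map_eq_affine hA hB hU (ae_of_all _ hA0) (ae_of_all _ hB0) hU0
      hindep hfix hp.1 (hAp p hp) (hAp1 p hp)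
      (integrable_rpow_of_le hB.aestronglyMeasurable hB0 hp.1.le hp.2.le hBκ)

/-- Basic consequences of the non-degeneracy conditions:
(i) `E A^p < 1` for `p ∈ (0,κ)`; (ii) `E[A^κ ln A] ∈ (0,+∞]`, the expectation being well
defined since `E[A^κ ln⁻ A] < ∞`; (iii) the solution `U` satisfies `E U^p < ∞` for `p ∈ (0,κ)`. -/
theorem nondegeneracy_consequences
    {Ω : Type*} [MeasurableSpace Ω] (μ : Measure Ω) [IsProbabilityMeasure μ]
    (A B U : Ω → ℝ) (κ : ℝ)
    (hA : Measurable A) (hB : Measurable B) (hU : Measurable U)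
    (hA0 : ∀ ω, 0 ≤ A ω) (hB0 : ∀ ω, 0 ≤ B ω) (hU0 : ∀ᵐ ω ∂μ, 0 ≤ U ω)
    (hκ : 0 < κ)
    (hAne1 : μ {ω | A ω = 1} < 1)
    (hBne0 : μ {ω | B ω = 0} < 1)
    (hAκint : Integrable (fun ω => A ω ^ κ) μ)
    (hAκ : ∫ ω, A ω ^ κ ∂μ = 1)
    (hBκ : Integrable (fun ω => B ω ^ κ) μ)
    (hindep : IndepFun U (fun ω => (A ω, B ω)) μ)
    (hfix : Measure.map U μ = Measure.map (fun ω => A ω * U ω + B ω) μ) :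
    (∀ p : ℝ, p ∈ Set.Ioo 0 κ →
      Integrable (fun ω => A ω ^ p) μ ∧ (∫ ω, A ω ^ p ∂μ) < 1) ∧
    (Integrable (fun ω => A ω ^ κ * max (-Real.log (A ω)) 0) μ ∧
      (¬ Integrable (fun ω => A ω ^ κ * Real.log (A ω)) μ ∨
        0 < ∫ ω, A ω ^ κ * Real.log (A ω) ∂μ)) ∧
    (∀ p : ℝ, p ∈ Set.Ioo 0 κ → Integrable (fun ω => U ω ^ p) μ) :=
  nondegeneracy_consequences_general μ A B U κ hA hB hU hA0 hB0 hU0 hκ hAne1 hAκint hAκ hBκ hindep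
    hfix
end

section
/- Let Y be a nonnegative random variable such that ℓ(x) = E[Y 1{Y ≤ x}] is a slowly varying function. Then x P(Y > x)/E[Y 1{Y ≤ x}] → 0 as x → ∞; in particular, ℓ₁(x) = E[Y ∧ x] = E[Y 1{Y ≤ x}] + x P(Y > x) satisfies ℓ₁(x)/ℓ(x) → 1 as x → ∞. -/
/-!
On `{x < Y ≤ 2x}` one has `Y > x`, so `x (P(Y > x) - P(Y > 2x)) ≤ ℓ(2x) - ℓ(x) ≤ ε ℓ(x)` for
large `x`. Applying this at `x, 2x, 4x, …` and using `ℓ(2ᵏx) ≤ (1 + ε)ᵏ ℓ(x)`, the telescoping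
sum bounds `x P(Y > x)` by `ε ℓ(x) ∑ ((1 + ε)/2)ᵏ ≤ 4 ε ℓ(x)`. The second claim follows from
`E[Y ∧ x] = ℓ(x) + x P(Y > x)`.
-/

open MeasureTheory Filter Topology

/-- A measurable function `ℓ` is slowly varying if it is eventually positive and
`ℓ(t x)/ℓ(x) → 1` as `x → ∞` for every `t > 0`. -/
def SlowlyVarying (f : ℝ → ℝ) : Prop :=
  (∀ᶠ x in Filter.atTop, 0 < f x) ∧
    ∀ t : ℝ, 0 < t → Filter.Tendsto (fun x => f (t * x) / f x) Filter.atTop (nhds 1)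

open Finset

theorem mul_sub_le_mul_geom_sum_of_doubling {ℓ G : ℝ → ℝ} {x₀ ε x : ℝ} (hε : 0 ≤ ε)
    (hdouble : ∀ y ≥ x₀, ℓ (2 * y) ≤ (1 + ε) * ℓ y)
    (hstep : ∀ y ≥ x₀, y * (G y - G (2 * y)) ≤ ε * ℓ y) (hx₀ : x₀ ≤ x) (hx : 0 ≤ x) (n : ℕ) :
    x * (G x - G (2 ^ n * x)) ≤ ε * ℓ x * ∑ k ∈ range n, ((1 + ε) / 2) ^ k := by
  have hpts : ∀ k : ℕ, x₀ ≤ 2 ^ k * x := fun k =>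
    hx₀.trans (le_mul_of_one_le_left hx (one_le_pow₀ one_le_two))
  have hgrowth : ∀ k : ℕ, ℓ (2 ^ k * x) ≤ (1 + ε) ^ k * ℓ x := fun k => by
    simpa using le_geom (u := fun k => ℓ (2 ^ k * x)) (by linarith) k fun j _ => by
      simpa only [pow_succ', mul_assoc] using hdouble _ (hpts j)
  have hterm : ∀ k : ℕ,
      x * (G (2 ^ k * x) - G (2 ^ (k + 1) * x)) ≤ ε * ℓ x * ((1 + ε) / 2) ^ k := fun k => by
    have h := (hstep _ (hpts k)).trans (mul_le_mul_of_nonneg_left (hgrowth k) hε)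
    rw [pow_succ', mul_assoc, div_pow, ← mul_div_assoc, le_div_iff₀ (by positivity)]
    linarith
  calc x * (G x - G (2 ^ n * x))
      = ∑ k ∈ range n, x * (G (2 ^ k * x) - G (2 ^ (k + 1) * x)) := by
        rw [← mul_sum, sum_range_sub' (fun k => G (2 ^ k * x)), pow_zero, one_mul]
    _ ≤ ∑ k ∈ range n, ε * ℓ x * ((1 + ε) / 2) ^ k := sum_le_sum fun k _ => hterm k
    _ = ε * ℓ x * ∑ k ∈ range n, ((1 + ε) / 2) ^ k := (mul_sum ..).symm

namespace SlowlyVarying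

theorem eventually_mul_le {ℓ G : ℝ → ℝ} (hℓ : SlowlyVarying ℓ) (hG : Tendsto G atTop (𝓝 0))
    (hkey : ∀ᶠ x in atTop, x * (G x - G (2 * x)) ≤ ℓ (2 * x) - ℓ x) {δ : ℝ} (hδ : 0 < δ) :
    ∀ᶠ x in atTop, x * G x ≤ δ * ℓ x := by
  set ε := min (δ / 4) (1 / 2)
  have hε : 0 < ε := lt_min (by linarith) one_half_pos
  have hεhalf : ε ≤ 1 / 2 := min_le_right _ _
  have hεδ : ε ≤ δ / 4 := min_le_left _ _
  have hdouble : ∀ᶠ y in atTop, 0 < ℓ y ∧ ℓ (2 * y) ≤ (1 + ε) * ℓ y := by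
    have hlt : (1 : ℝ) < 1 + ε := by linarith
    filter_upwards [hℓ.1, (hℓ.2 2 two_pos).eventually (eventually_le_nhds hlt)] with y hy hratio
    exact ⟨hy, by rwa [div_le_iff₀ hy] at hratio⟩
  obtain ⟨x₀, hx₀⟩ := eventually_atTop.1 ((hdouble.and hkey).and (eventually_gt_atTop 0))
  filter_upwards [eventually_ge_atTop x₀] with x hx
  obtain ⟨⟨⟨hℓx, -⟩, -⟩, hxpos⟩ := hx₀ x hx
  have hstep : ∀ y ≥ x₀, y * (G y - G (2 * y)) ≤ ε * ℓ y := fun y hy => by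
    obtain ⟨⟨⟨-, h2⟩, hk⟩, -⟩ := hx₀ y hy
    linarith
  have hgeom : ∀ n : ℕ, ∑ k ∈ range n, ((1 + ε) / 2) ^ k ≤ 4 := fun n => by
    rw [range_eq_Ico]
    refine (geom_sum_Ico_le_of_lt_one (by positivity) (by linarith)).trans ?_
    rw [pow_zero, div_le_iff₀ (by linarith)]
    linarith
  have hbound : ∀ n : ℕ, x * (G x - G (2 ^ n * x)) ≤ 4 * ε * ℓ x := fun n => by
    have h := mul_sub_le_mul_geom_sum_of_doubling hε.le (fun y hy => (hx₀ y hy).1.1.2) hstep hx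
      hxpos.le n
    nlinarith [mul_le_mul_of_nonneg_left (hgeom n) (mul_nonneg hε.le hℓx.le)]
  have hlim : Tendsto (fun n : ℕ => x * (G x - G (2 ^ n * x))) atTop (𝓝 (x * G x)) := by
    have h2n : Tendsto (fun n : ℕ => (2 : ℝ) ^ n * x) atTop atTop :=
      (tendsto_pow_atTop_atTop_of_one_lt one_lt_two).atTop_mul_const hxpos
    simpa using ((hG.comp h2n).const_sub (G x)).const_mul x
  nlinarith [le_of_tendsto' hlim hbound]

theorem tendsto_mul_div_of_mul_sub_le {ℓ G : ℝ → ℝ} (hℓ : SlowlyVarying ℓ)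
    (hG0 : ∀ᶠ x in atTop, 0 ≤ G x) (hG : Tendsto G atTop (𝓝 0))
    (hkey : ∀ᶠ x in atTop, x * (G x - G (2 * x)) ≤ ℓ (2 * x) - ℓ x) :
    Tendsto (fun x => x * G x / ℓ x) atTop (𝓝 0) := by
  refine tendsto_order.2 ⟨fun a ha => ?_, fun a ha => ?_⟩
  · filter_upwards [hℓ.1, hG0, eventually_ge_atTop 0] with x hpos hGx hx
    exact ha.trans_le (div_nonneg (mul_nonneg hx hGx) hpos.le)
  · filter_upwards [hℓ.1, hℓ.eventually_mul_le hG hkey (half_pos ha)] with x hpos hle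
    rw [div_lt_iff₀ hpos]
    nlinarith [mul_pos ha hpos]

end SlowlyVarying

section TruncatedMean

variable {Ω : Type*} [MeasurableSpace Ω] {μ : Measure Ω} [IsFiniteMeasure μ] {Y : Ω → ℝ}

theorem tendsto_measureReal_lt_atTop (hY : AEMeasurable Y μ) :
    Tendsto (fun x : ℝ => μ.real {ω | x < Y ω}) atTop (𝓝 0) := by
  have hempty : ⋂ x : ℝ, {ω | x < Y ω} = ∅ := by
    ext ω
    simpa using ⟨Y ω, le_rfl⟩
  have h := tendsto_measure_iInter_atTop (μ := μ) (s := fun x : ℝ => {ω | x < Y ω})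
    (fun _ => nullMeasurableSet_lt aemeasurable_const hY) (fun _ _ hxy _ h => hxy.trans_lt h)
    ⟨0, measure_ne_top μ _⟩
  rw [hempty, measure_empty] at h
  exact (ENNReal.tendsto_toReal ENNReal.zero_ne_top).comp h

theorem integrable_ite_le (hY : Measurable Y) (hY0 : ∀ ω, 0 ≤ Y ω) (x : ℝ) :
    Integrable (fun ω => if Y ω ≤ x then Y ω else 0) μ := by
  refine (integrable_const |x|).mono'
    (hY.ite (measurableSet_le hY measurable_const) measurable_const).aestronglyMeasurable
    (Eventually.of_forall fun ω => ?_)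
  split_ifs with h
  · exact abs_le_abs_of_nonneg (hY0 ω) h
  · simp

theorem mul_sub_measureReal_lt_le_integral_sub (hY : Measurable Y) (hY0 : ∀ ω, 0 ≤ Y ω)
    {x y : ℝ} (hxy : x ≤ y) :
    x * (μ.real {ω | x < Y ω} - μ.real {ω | y < Y ω}) ≤
      (∫ ω, if Y ω ≤ y then Y ω else 0 ∂μ) - ∫ ω, if Y ω ≤ x then Y ω else 0 ∂μ := by
  have hmeas : ∀ z : ℝ, MeasurableSet {ω | z < Y ω} := fun z =>
    measurableSet_lt measurable_const hY
  have hind : ∀ z : ℝ, Integrable ({ω | z < Y ω}.indicator 1) μ := fun z =>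
    (integrable_const (1 : ℝ)).indicator (hmeas z)
  have hpt : ∀ ω, x * ({ω | x < Y ω}.indicator 1 ω - {ω | y < Y ω}.indicator (1 : Ω → ℝ) ω) ≤
      (if Y ω ≤ y then Y ω else 0) - if Y ω ≤ x then Y ω else 0 := by
    intro ω
    simp only [Set.indicator_apply, Set.mem_ofPred_eq, Pi.one_apply]
    split_ifs <;> linarith
  calc x * (μ.real {ω | x < Y ω} - μ.real {ω | y < Y ω})
      = ∫ ω, x * ({ω | x < Y ω}.indicator 1 ω - {ω | y < Y ω}.indicator 1 ω) ∂μ := by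
        rw [integral_const_mul, integral_sub (hind x) (hind y), integral_indicator_one (hmeas x),
          integral_indicator_one (hmeas y)]
    _ ≤ ∫ ω, ((if Y ω ≤ y then Y ω else 0) - if Y ω ≤ x then Y ω else 0) ∂μ :=
        integral_mono (((hind x).sub (hind y)).const_mul x)
          ((integrable_ite_le hY hY0 y).sub (integrable_ite_le hY hY0 x)) hpt
    _ = _ := integral_sub (integrable_ite_le hY hY0 y) (integrable_ite_le hY hY0 x)

theorem integral_min_eq (hY : Measurable Y) (hY0 : ∀ ω, 0 ≤ Y ω) (x : ℝ) :
    ∫ ω, min (Y ω) x ∂μ =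
      (∫ ω, if Y ω ≤ x then Y ω else 0 ∂μ) + x * μ.real {ω | x < Y ω} := by
  have hind : Integrable ({ω | x < Y ω}.indicator 1) μ :=
    (integrable_const (1 : ℝ)).indicator (measurableSet_lt measurable_const hY)
  have hsplit : (fun ω => min (Y ω) x) =
      fun ω => (if Y ω ≤ x then Y ω else 0) + x * {ω | x < Y ω}.indicator 1 ω := by
    funext ω
    rcases le_or_gt (Y ω) x with h | h
    · simp [h, h.not_gt]
    · simp [h, h.not_ge, h.le]
  rw [hsplit, integral_add (integrable_ite_le hY hY0 x) (hind.const_mul x), integral_const_mul,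
    integral_indicator_one (measurableSet_lt measurable_const hY)]

end TruncatedMean

/-- If `ℓ(x) = E[Y 1{Y ≤ x}]` is slowly varying, then `x P(Y > x)/ℓ(x) → 0`;
in particular `E[Y ∧ x] ≍ ℓ(x)`. -/
theorem tail_negligible_of_slowly_varying_truncated_mean
    {Ω : Type*} [MeasurableSpace Ω] (μ : Measure Ω) [IsProbabilityMeasure μ]
    (Y : Ω → ℝ) (ℓ : ℝ → ℝ)
    (hY : Measurable Y) (hY0 : ∀ ω, 0 ≤ Y ω)
    (hℓdef : ∀ x : ℝ, ℓ x = ∫ ω, (if Y ω ≤ x then Y ω else 0) ∂μ)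
    (hℓ : SlowlyVarying ℓ) :
    Filter.Tendsto (fun x : ℝ => x * (μ {ω | x < Y ω}).toReal / ℓ x)
      Filter.atTop (nhds 0) ∧
    Filter.Tendsto (fun x : ℝ => (∫ ω, min (Y ω) x ∂μ) / ℓ x)
      Filter.atTop (nhds 1) := by
  have hkey : ∀ᶠ x in atTop, x * (μ.real {ω | x < Y ω} - μ.real {ω | 2 * x < Y ω}) ≤
      ℓ (2 * x) - ℓ x := by
    filter_upwards [eventually_ge_atTop 0] with x hx
    rw [hℓdef, hℓdef]
    exact mul_sub_measureReal_lt_le_integral_sub hY hY0 (by linarith)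
  have htail : Tendsto (fun x => x * μ.real {ω | x < Y ω} / ℓ x) atTop (𝓝 0) :=
    hℓ.tendsto_mul_div_of_mul_sub_le (Eventually.of_forall fun _ => measureReal_nonneg)
      (tendsto_measureReal_lt_atTop hY.aemeasurable) hkey
  have hone : Tendsto (fun x => 1 + x * μ.real {ω | x < Y ω} / ℓ x) atTop (𝓝 1) := by
    simpa using tendsto_const_nhds.add htail
  refine ⟨htail, hone.congr' ?_⟩
  filter_upwards [hℓ.1] with x hx
  rw [integral_min_eq hY hY0, ← hℓdef, add_div, div_self hx.ne']
end

section
/- Let {X_{n,k} : k = 1,…,k_n, n ∈ ℕ} be an array of real random variables such that for each n the row X_{n,1},…,X_{n,k_n} is adapted to a filtration F_{n,0} ⊆ F_{n,1} ⊆ … ⊆ F_{n,k_n}. Fix θ ∈ ℝ and define the conditional characteristic functions φ_{n,k}(θ) = E(e^{iθ X_{n,k}} | F_{n,k−1}) and the product φ_n(θ) = φ_{n,1}(θ) φ_{n,2}(θ) ⋯ φ_{n,k_n}(θ). If φ_n(θ) converges in probability to a (deterministic) constant C(θ) ≠ 0, then E[e^{iθ (X_{n,1} + X_{n,2} + … +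 X_{n,k_n})}] → C(θ) as n → ∞. -/
/-!
Fix `0 < ε ≤ 1` with `2ε ≤ ‖C‖`, and let `A_j` be the event that the partial products
`Π_0, …, Π_j` of the conditional characteristic functions all have modulus at least `ε`; it is
known one step ahead. On `A_j` the ratio `M_j = e^{iθS_j} / Π_j` is bounded by `1/ε`, and
conditioning on the past turns the new factor `e^{iθX_{j+1}}` into `φ_{j+1}`. Hence the cut-off
ratio `1_{A_j} M_j` has expectation `1` up to the mass lost when leaving the `A`'s, at most
`μ(A_jᶜ)/ε`. Splitting
`E e^{iθS} - C = E[1_{Aᶜ} e^{iθS}] + E[1_A M (Π - C)] + C (E[1_A M] - 1)`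
bounds the error by a multiple of `μ(Aᶜ) + E‖Π - C‖`. Both vanish in the limit: `Π` is bounded
by `1` and tends to `C` in probability, and leaving `A` forces `‖Π - C‖ ≥ ε`.
-/

open MeasureTheory ProbabilityTheory Filter Topology Finset

theorem Finset.prod_Icc_one_eq_prod_range {M : Type*} [CommMonoid M] (f : ℕ → M) (n : ℕ) :
    ∏ i ∈ Icc 1 n, f i = ∏ i ∈ range n, f (i + 1) := by
  rw [← Ico_add_one_right_eq_Icc, prod_Ico_eq_prod_range]
  simp [add_comm]

section Integrals

variable {Ω : Type*} {m m0 : MeasurableSpace Ω} {μ : Measure Ω}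

theorem integral_mul_condExp_of_stronglyMeasurable_left {R : Type*} [NormedRing R]
    [NormedAlgebra ℝ R] [CompleteSpace R] (hm : m ≤ m0) [SigmaFinite (μ.trim hm)] {f g : Ω → R}
    (hf : StronglyMeasurable[m] f) (hfg : Integrable (fun ω => f ω * g ω) μ)
    (hg : Integrable g μ) :
    ∫ ω, f ω * g ω ∂μ = ∫ ω, f ω * μ[g | m] ω ∂μ := by
  rw [← integral_condExp hm]
  exact integral_congr_ae (condExp_bilin_of_stronglyMeasurable_left (.mul ℝ R) hf hfg hg)

theorem MeasureTheory.TendstoInMeasure.tendsto_integral_norm_sub_of_norm_le [IsFiniteMeasure μ]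
    {E : Type*} [NormedAddCommGroup E] {f : ℕ → Ω → E} {g : Ω → E} {R : ℝ}
    (hfg : TendstoInMeasure μ f atTop g) (hf : ∀ n, AEStronglyMeasurable (f n) μ)
    (hfR : ∀ n, ∀ᵐ ω ∂μ, ‖f n ω‖ ≤ R) (hg : Integrable g μ) :
    Tendsto (fun n => ∫ ω, ‖f n ω - g ω‖ ∂μ) atTop (𝓝 0) := by
  have hui : UnifIntegrable f 1 μ := by
    refine unifIntegrable_of le_rfl ENNReal.one_ne_top hf fun _ _ => ⟨R.toNNReal + 1, fun n => ?_⟩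
    have hnull : {ω | R.toNNReal + 1 ≤ ‖f n ω‖₊}.indicator (f n) =ᵐ[μ] (0 : Ω → E) := by
      filter_upwards [hfR n] with ω hω
      have hlt : ‖f n ω‖₊ < R.toNNReal + 1 := by
        rw [← NNReal.coe_lt_coe, coe_nnnorm]
        push_cast
        linarith [Real.le_coe_toNNReal R]
      simp [hlt.not_ge]
    simp [eLpNorm_congr_ae hnull]
  have hL1 := tendsto_Lp_finite_of_tendstoInMeasure le_rfl ENNReal.one_ne_top hf
    (memLp_one_iff_integrable.2 hg) hui hfg
  refine ((ENNReal.tendsto_toReal ENNReal.zero_ne_top).comp hL1).congr fun n => ?_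
  rw [Function.comp_apply, eLpNorm_one_eq_lintegral_enorm,
    ← integral_norm_eq_lintegral_enorm ((hf n).sub hg.1)]
  rfl

end Integrals

section ConditionalProduct

variable {Ω : Type*} {m0 : MeasurableSpace Ω}

noncomputable def condProd (μ : Measure Ω) (𝓕 : Filtration ℕ m0) (Z : ℕ → Ω → ℂ) (j : ℕ)
    (ω : Ω) : ℂ :=
  ∏ i ∈ range j, μ[Z i | 𝓕 i] ω

def condProdNormGe (μ : Measure Ω) (𝓕 : Filtration ℕ m0) (Z : ℕ → Ω → ℂ) (ε : ℝ) (j : ℕ) :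
    Set Ω :=
  {ω | ∀ i ≤ j, ε ≤ ‖condProd μ 𝓕 Z i ω‖}

noncomputable def condRatio (μ : Measure Ω) (𝓕 : Filtration ℕ m0) (Z : ℕ → Ω → ℂ) (j : ℕ)
    (ω : Ω) : ℂ :=
  (∏ i ∈ range j, Z i ω) / condProd μ 𝓕 Z j ω

noncomputable def truncCondRatio (μ : Measure Ω) (𝓕 : Filtration ℕ m0) (Z : ℕ → Ω → ℂ) (ε : ℝ)
    (j : ℕ) : Ω → ℂ :=
  (condProdNormGe μ 𝓕 Z ε j).indicator (condRatio μ 𝓕 Z j)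

variable {μ : Measure Ω} {𝓕 : Filtration ℕ m0} {Z : ℕ → Ω → ℂ} {ε : ℝ} {j l : ℕ} {ω : Ω}

lemma condProd_zero : condProd μ 𝓕 Z 0 = 1 := by
  funext ω
  simp [condProd]

lemma condProd_succ (j : ℕ) (ω : Ω) :
    condProd μ 𝓕 Z (j + 1) ω = condProd μ 𝓕 Z j ω * μ[Z j | 𝓕 j] ω :=
  prod_range_succ _ _

lemma stronglyMeasurable_condProd (h : j ≤ l + 1) :
    StronglyMeasurable[𝓕 l] (condProd μ 𝓕 Z j) :=
  stronglyMeasurable_fun_prod _ fun i hi =>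
    stronglyMeasurable_condExp.mono (𝓕.mono (by grind))

lemma measurableSet_condProdNormGe (h : j ≤ l + 1) :
    MeasurableSet[𝓕 l] (condProdNormGe μ 𝓕 Z ε j) := by
  simp only [condProdNormGe, Set.ofPred_forall]
  refine .iInter fun i => .iInter fun hi => ?_
  have hm : Measurable[𝓕 l] fun ω => ‖condProd μ 𝓕 Z i ω‖ :=
    measurable_norm.comp (stronglyMeasurable_condProd (hi.trans h)).measurable
  exact hm measurableSet_Ici

lemma condProdNormGe_succ_subset : condProdNormGe μ 𝓕 Z ε (j + 1) ⊆ condProdNormGe μ 𝓕 Z ε j :=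
  fun _ hω i hi => hω i (hi.trans j.le_succ)

lemma condProdNormGe_zero (hε : ε ≤ 1) : condProdNormGe μ 𝓕 Z ε 0 = Set.univ :=
  Set.eq_univ_of_forall fun ω i hi => by simpa [Nat.le_zero.1 hi, condProd_zero] using hε

lemma condProd_ne_zero_of_mem (hε : 0 < ε) (hω : ω ∈ condProdNormGe μ 𝓕 Z ε j) :
    condProd μ 𝓕 Z j ω ≠ 0 :=
  norm_pos_iff.1 (hε.trans_le (hω j le_rfl))

lemma antitone_norm_condProd (hω : ∀ i, ‖μ[Z i | 𝓕 i] ω‖ ≤ 1) :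
    Antitone fun j => ‖condProd μ 𝓕 Z j ω‖ := by
  intro j l h
  dsimp only
  rw [condProd, condProd, ← prod_range_mul_prod_Ico _ h, norm_mul]
  refine mul_le_of_le_one_right (norm_nonneg _) ((Finset.norm_prod_le _ _).trans ?_)
  exact prod_le_one (fun _ _ => norm_nonneg _) fun i _ => hω i

lemma ae_forall_norm_condExp_le_one (hZ1 : ∀ i ω, ‖Z i ω‖ ≤ 1) :
    ∀ᵐ ω ∂μ, ∀ i, ‖μ[Z i | 𝓕 i] ω‖ ≤ 1 :=
  ae_all_iff.2 fun i => ae_bdd_norm_condExp_of_ae_bdd_norm (ae_of_all _ (hZ1 i))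

lemma ae_norm_condProd_le_one (hZ1 : ∀ i ω, ‖Z i ω‖ ≤ 1) (j : ℕ) :
    ∀ᵐ ω ∂μ, ‖condProd μ 𝓕 Z j ω‖ ≤ 1 := by
  filter_upwards [ae_forall_norm_condExp_le_one hZ1] with ω hω
  simpa [condProd_zero] using antitone_norm_condProd hω (Nat.zero_le j)

lemma measureReal_compl_condProdNormGe_le [IsFiniteMeasure μ] (hZ1 : ∀ i ω, ‖Z i ω‖ ≤ 1)
    {C : ℂ} (hεC : 2 * ε ≤ ‖C‖) (j : ℕ) :
    μ.real (condProdNormGe μ 𝓕 Z ε j)ᶜ ≤ μ.real {ω | ε ≤ dist (condProd μ 𝓕 Z j ω) C} := by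
  refine ENNReal.toReal_mono (measure_ne_top _ _) (measure_mono_ae ?_)
  filter_upwards [ae_forall_norm_condExp_le_one (𝓕 := 𝓕) hZ1]
    with ω hω (hbad : ω ∉ condProdNormGe μ 𝓕 Z ε j)
  obtain ⟨i, hij, hi⟩ : ∃ i ≤ j, ‖condProd μ 𝓕 Z i ω‖ < ε := by
    simpa [condProdNormGe] using hbad
  have hji := antitone_norm_condProd hω hij
  have hC := norm_sub_norm_le C (condProd μ 𝓕 Z j ω)
  change ε ≤ dist _ C
  rw [dist_comm, dist_eq_norm]
  linarith

lemma stronglyMeasurable_prod_range (hZ : ∀ i, StronglyMeasurable[𝓕 (i + 1)] (Z i)) (j : ℕ) :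
    StronglyMeasurable[𝓕 j] fun ω => ∏ i ∈ range j, Z i ω :=
  stronglyMeasurable_fun_prod _ fun i hi => (hZ i).mono (𝓕.mono (by grind))

lemma norm_prod_range_le_one (hZ1 : ∀ i ω, ‖Z i ω‖ ≤ 1) (j : ℕ) (ω : Ω) :
    ‖∏ i ∈ range j, Z i ω‖ ≤ 1 :=
  (Finset.norm_prod_le _ _).trans (prod_le_one (fun _ _ => norm_nonneg _) fun i _ => hZ1 i ω)

lemma stronglyMeasurable_condRatio (hZ : ∀ i, StronglyMeasurable[𝓕 (i + 1)] (Z i)) (j : ℕ) :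
    StronglyMeasurable[𝓕 j] (condRatio μ 𝓕 Z j) :=
  (stronglyMeasurable_prod_range hZ j).div (stronglyMeasurable_condProd j.le_succ)

lemma norm_condRatio_le_of_mem (hZ1 : ∀ i ω, ‖Z i ω‖ ≤ 1) (hε : 0 < ε)
    (hω : ω ∈ condProdNormGe μ 𝓕 Z ε j) : ‖condRatio μ 𝓕 Z j ω‖ ≤ ε⁻¹ := by
  rw [condRatio, norm_div, ← one_div]
  exact div_le_div₀ zero_le_one (norm_prod_range_le_one hZ1 j ω) hε (hω j le_rfl)

lemma norm_truncCondRatio_le (hZ1 : ∀ i ω, ‖Z i ω‖ ≤ 1) (hε : 0 < ε) (j : ℕ) (ω : Ω) :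
    ‖truncCondRatio μ 𝓕 Z ε j ω‖ ≤ ε⁻¹ := by
  by_cases hω : ω ∈ condProdNormGe μ 𝓕 Z ε j
  · simpa [truncCondRatio, hω] using norm_condRatio_le_of_mem hZ1 hε hω
  · simpa [truncCondRatio, hω] using hε.le

lemma integrable_truncCondRatio [IsFiniteMeasure μ]
    (hZ : ∀ i, StronglyMeasurable[𝓕 (i + 1)] (Z i)) (hZ1 : ∀ i ω, ‖Z i ω‖ ≤ 1) (hε : 0 < ε)
    (j : ℕ) : Integrable (truncCondRatio μ 𝓕 Z ε j) μ :=
  .of_bound ((((stronglyMeasurable_condRatio hZ j).indicator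
    (measurableSet_condProdNormGe j.le_succ)).mono (𝓕.le j)).aestronglyMeasurable) ε⁻¹
    (ae_of_all _ (norm_truncCondRatio_le hZ1 hε j))

lemma integral_truncCondRatio_succ [IsFiniteMeasure μ]
    (hZ : ∀ i, StronglyMeasurable[𝓕 (i + 1)] (Z i)) (hZ1 : ∀ i ω, ‖Z i ω‖ ≤ 1) (hε : 0 < ε)
    (j : ℕ) :
    ∫ ω, truncCondRatio μ 𝓕 Z ε (j + 1) ω ∂μ =
      ∫ ω in condProdNormGe μ 𝓕 Z ε (j + 1), truncCondRatio μ 𝓕 Z ε j ω ∂μ := by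
  set A := condProdNormGe μ 𝓕 Z ε (j + 1)
  have hA : MeasurableSet[𝓕 j] A := measurableSet_condProdNormGe le_rfl
  set g := A.indicator fun ω => (∏ i ∈ range j, Z i ω) / condProd μ 𝓕 Z (j + 1) ω
  have hg : StronglyMeasurable[𝓕 j] g :=
    ((stronglyMeasurable_prod_range hZ j).div (stronglyMeasurable_condProd le_rfl)).indicator hA
  have hgZ : truncCondRatio μ 𝓕 Z ε (j + 1) = fun ω => g ω * Z j ω := by
    funext ω
    by_cases hω : ω ∈ A <;>
      simp [truncCondRatio, condRatio, g, A, hω, prod_range_succ, div_mul_eq_mul_div]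
  have hgφ : (fun ω => g ω * μ[Z j | 𝓕 j] ω) = A.indicator (truncCondRatio μ 𝓕 Z ε j) := by
    funext ω
    by_cases hω : ω ∈ A
    · have hne := condProd_ne_zero_of_mem hε hω
      rw [condProd_succ] at hne
      simp only [g, hω, Set.indicator_of_mem, truncCondRatio, condRatio,
        condProdNormGe_succ_subset hω, condProd_succ]
      rw [div_mul_eq_mul_div, mul_div_mul_right _ _ (right_ne_zero_of_mul hne)]
    · simp [g, hω]
  have hZj : Integrable (Z j) μ :=
    .of_bound ((hZ j).mono (𝓕.le _)).aestronglyMeasurable 1 (ae_of_all _ (hZ1 j))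
  rw [← integral_indicator (𝓕.le j _ hA), ← hgφ, hgZ]
  exact integral_mul_condExp_of_stronglyMeasurable_left (𝓕.le j) hg
    (hgZ ▸ integrable_truncCondRatio hZ hZ1 hε _) hZj

lemma norm_integral_truncCondRatio_sub_one_le [IsProbabilityMeasure μ]
    (hZ : ∀ i, StronglyMeasurable[𝓕 (i + 1)] (Z i)) (hZ1 : ∀ i ω, ‖Z i ω‖ ≤ 1) (hε : 0 < ε)
    (hε1 : ε ≤ 1) (j : ℕ) :
    ‖∫ ω, truncCondRatio μ 𝓕 Z ε j ω ∂μ - 1‖ ≤ ε⁻¹ * μ.real (condProdNormGe μ 𝓕 Z ε j)ᶜ := by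
  set A := condProdNormGe μ 𝓕 Z ε
  have hA : ∀ i, MeasurableSet (A i) := fun i => 𝓕.le i _ (measurableSet_condProdNormGe i.le_succ)
  rw [probReal_compl_eq_one_sub (hA j)]
  induction j with
  | zero => simp [A, truncCondRatio, condProdNormGe_zero hε1, condRatio, condProd_zero]
  | succ j ih =>
    have hsplit := integral_add_compl (hA (j + 1)) (integrable_truncCondRatio (μ := μ) hZ hZ1 hε j)
    have hleak : ‖∫ ω in (A (j + 1))ᶜ, truncCondRatio μ 𝓕 Z ε j ω ∂μ‖
        ≤ ε⁻¹ * (μ.real (A j) - μ.real (A (j + 1))) := by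
      rw [truncCondRatio, setIntegral_indicator (hA j),
        ← measureReal_sdiff condProdNormGe_succ_subset (hA _), Set.sdiff_eq, Set.inter_comm]
      exact norm_setIntegral_le_of_norm_le_const (measure_lt_top μ _) fun ω hω =>
        norm_condRatio_le_of_mem hZ1 hε hω.1
    rw [integral_truncCondRatio_succ hZ hZ1 hε]
    calc ‖∫ ω in A (j + 1), truncCondRatio μ 𝓕 Z ε j ω ∂μ - 1‖
        = ‖(∫ ω, truncCondRatio μ 𝓕 Z ε j ω ∂μ - 1)
            - ∫ ω in (A (j + 1))ᶜ, truncCondRatio μ 𝓕 Z ε j ω ∂μ‖ := by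
          rw [← hsplit]
          ring_nf
      _ ≤ ε⁻¹ * (1 - μ.real (A j)) + ε⁻¹ * (μ.real (A j) - μ.real (A (j + 1))) :=
          (norm_sub_le _ _).trans (add_le_add ih hleak)
      _ = ε⁻¹ * (1 - μ.real (A (j + 1))) := by ring

lemma norm_integral_prod_sub_le [IsProbabilityMeasure μ]
    (hZ : ∀ i, StronglyMeasurable[𝓕 (i + 1)] (Z i)) (hZ1 : ∀ i ω, ‖Z i ω‖ ≤ 1) (hε : 0 < ε)
    (hε1 : ε ≤ 1) (C : ℂ) (j : ℕ) :
    ‖∫ ω, ∏ i ∈ range j, Z i ω ∂μ - C‖ ≤ (‖C‖ * ε⁻¹ + 1) * μ.real (condProdNormGe μ 𝓕 Z ε j)ᶜ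
      + ε⁻¹ * ∫ ω, ‖condProd μ 𝓕 Z j ω - C‖ ∂μ := by
  set A := condProdNormGe μ 𝓕 Z ε j
  set M := truncCondRatio μ 𝓕 Z ε j
  have hA : MeasurableSet A := 𝓕.le j _ (measurableSet_condProdNormGe j.le_succ)
  have hP : Integrable (fun ω => ∏ i ∈ range j, Z i ω) μ :=
    .of_bound ((stronglyMeasurable_prod_range hZ j).mono (𝓕.le j)).aestronglyMeasurable 1
      (ae_of_all _ (norm_prod_range_le_one hZ1 j))
  have hcondC : Integrable (fun ω => condProd μ 𝓕 Z j ω - C) μ :=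
    (Integrable.of_bound
      ((stronglyMeasurable_condProd j.le_succ).mono (𝓕.le j)).aestronglyMeasurable 1
      (ae_norm_condProd_le_one hZ1 j)).sub (integrable_const C)
  have hM : Integrable M μ := integrable_truncCondRatio hZ hZ1 hε j
  have hMcondC : Integrable (fun ω => M ω * (condProd μ 𝓕 Z j ω - C)) μ :=
    hcondC.bdd_mul hM.1 (ae_of_all _ (norm_truncCondRatio_le hZ1 hε j))
  have hPA : ∫ ω in A, ∏ i ∈ range j, Z i ω ∂μ
      = ∫ ω, M ω * (condProd μ 𝓕 Z j ω - C) ∂μ + C * ∫ ω, M ω ∂μ := by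
    rw [← integral_const_mul, ← integral_add hMcondC (hM.const_mul C), ← integral_indicator hA]
    congr 1
    funext ω
    by_cases hω : ω ∈ A
    · have hne := condProd_ne_zero_of_mem hε hω
      simp only [M, A] at hω ⊢
      simp only [truncCondRatio, condRatio, Set.indicator_of_mem hω]
      field_simp
      ring
    · simp [M, A, truncCondRatio, hω]
  have hdecomp : ∫ ω, ∏ i ∈ range j, Z i ω ∂μ - C = ∫ ω, M ω * (condProd μ 𝓕 Z j ω - C) ∂μ
      + C * (∫ ω, M ω ∂μ - 1) + ∫ ω in Aᶜ, ∏ i ∈ range j, Z i ω ∂μ := by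
    rw [← integral_add_compl hA hP, hPA]
    ring
  have h1 : ‖∫ ω, M ω * (condProd μ 𝓕 Z j ω - C) ∂μ‖
      ≤ ε⁻¹ * ∫ ω, ‖condProd μ 𝓕 Z j ω - C‖ ∂μ := by
    rw [← integral_const_mul]
    refine (norm_integral_le_integral_norm _).trans
      (integral_mono hMcondC.norm (hcondC.norm.const_mul _) fun ω => ?_)
    rw [norm_mul]
    exact mul_le_mul_of_nonneg_right (norm_truncCondRatio_le hZ1 hε j ω) (norm_nonneg _)
  have h2 : ‖C * (∫ ω, M ω ∂μ - 1)‖ ≤ ‖C‖ * (ε⁻¹ * μ.real Aᶜ) := by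
    rw [norm_mul]
    gcongr
    exact norm_integral_truncCondRatio_sub_one_le hZ hZ1 hε hε1 j
  have h3 : ‖∫ ω in Aᶜ, ∏ i ∈ range j, Z i ω ∂μ‖ ≤ 1 * μ.real Aᶜ :=
    norm_setIntegral_le_of_norm_le_const (measure_lt_top μ _) fun ω _ =>
      norm_prod_range_le_one hZ1 j ω
  rw [hdecomp]
  refine (norm_add₃_le ..).trans ((add_le_add (add_le_add h1 h2) h3).trans_eq ?_)
  ring

theorem tendsto_integral_prod_of_tendstoInMeasure_condProd [IsProbabilityMeasure μ]
    {𝓕 : ℕ → Filtration ℕ m0} {Z : ℕ → ℕ → Ω → ℂ} {K : ℕ → ℕ} {C : ℂ}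
    (hZ : ∀ n i, StronglyMeasurable[𝓕 n (i + 1)] (Z n i)) (hZ1 : ∀ n i ω, ‖Z n i ω‖ ≤ 1)
    (hC : C ≠ 0)
    (hconv : TendstoInMeasure μ (fun n => condProd μ (𝓕 n) (Z n) (K n)) atTop fun _ => C) :
    Tendsto (fun n => ∫ ω, ∏ i ∈ range (K n), Z n i ω ∂μ) atTop (𝓝 C) := by
  obtain ⟨ε, hε, hε1, hεC⟩ : ∃ ε : ℝ, 0 < ε ∧ ε ≤ 1 ∧ 2 * ε ≤ ‖C‖ :=
    ⟨min ‖C‖ 1 / 2, by positivity, by linarith [min_le_right ‖C‖ 1],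
      by linarith [min_le_left ‖C‖ 1]⟩
  have hbad := tendstoInMeasure_iff_measureReal_dist.1 hconv ε hε
  have hL1 := hconv.tendsto_integral_norm_sub_of_norm_le
    (fun n => ((stronglyMeasurable_condProd (K n).le_succ).mono ((𝓕 n).le _)).aestronglyMeasurable)
    (fun n => ae_norm_condProd_le_one (hZ1 n) (K n)) (integrable_const C)
  have hbound : ∀ n, ‖∫ ω, ∏ i ∈ range (K n), Z n i ω ∂μ - C‖
      ≤ (‖C‖ * ε⁻¹ + 1) * μ.real {ω | ε ≤ dist (condProd μ (𝓕 n) (Z n) (K n) ω) C}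
        + ε⁻¹ * ∫ ω, ‖condProd μ (𝓕 n) (Z n) (K n) ω - C‖ ∂μ := fun n =>
    (norm_integral_prod_sub_le (hZ n) (hZ1 n) hε hε1 C (K n)).trans (by
      have := measureReal_compl_condProdNormGe_le (μ := μ) (𝓕 := 𝓕 n) (hZ1 n) hεC (K n)
      gcongr)
  rw [tendsto_iff_norm_sub_tendsto_zero]
  refine squeeze_zero (fun n => norm_nonneg _) hbound ?_
  simpa using (hbad.const_mul (‖C‖ * ε⁻¹ + 1)).add (hL1.const_mul ε⁻¹)

end ConditionalProduct

/-- The Principle of Conditioning: if the product of the row-wise conditional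
characteristic functions converges in probability to a nonzero constant `C(θ)`,
then the characteristic function of the row sums converges to `C(θ)`. -/
theorem principle_of_conditioning
    {Ω : Type*} [m0 : MeasurableSpace Ω] (μ : Measure Ω) [IsProbabilityMeasure μ]
    (k : ℕ → ℕ) (X : ℕ → ℕ → Ω → ℝ) (F : ℕ → ℕ → MeasurableSpace Ω)
    (hFle : ∀ n i, F n i ≤ m0)
    (hFmono : ∀ n, Monotone (F n))
    (hadapted : ∀ n i, 1 ≤ i → i ≤ k n → Measurable[F n i] (X n i))
    (θ : ℝ) (C : ℂ) (hC : C ≠ 0)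
    (hconv : TendstoInMeasure μ
      (fun n : ℕ => fun ω : Ω =>
        ∏ i ∈ Finset.Icc 1 (k n),
          (μ[fun ω' => Complex.exp (Complex.I * (θ * X n i ω')) | F n (i - 1)]) ω)
      Filter.atTop (fun _ => C)) :
    Filter.Tendsto
      (fun n : ℕ =>
        ∫ ω, Complex.exp (Complex.I * (θ * ∑ i ∈ Finset.Icc 1 (k n), X n i ω)) ∂μ)
      Filter.atTop (nhds C) := by
  let 𝓕 n : Filtration ℕ m0 := ⟨F n, hFmono n, hFle n⟩
  -- the row, shifted to start at index `0` and extended by `1`, is adapted at every index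
  let Z n i ω : ℂ := if i < k n then Complex.exp (Complex.I * (θ * X n (i + 1) ω)) else 1
  have hZ_of_lt {n i : ℕ} (hi : i < k n) :
      Z n i = fun ω => Complex.exp (Complex.I * (θ * X n (i + 1) ω)) :=
    funext fun ω => if_pos hi
  have hZ (n i : ℕ) : StronglyMeasurable[𝓕 n (i + 1)] (Z n i) := by
    by_cases hi : i < k n
    · rw [hZ_of_lt hi]
      exact (by fun_prop : Measurable fun x : ℝ => Complex.exp (Complex.I * (θ * x))).comp
        (hadapted n (i + 1) (by omega) hi) |>.stronglyMeasurable
    · simp only [Z, if_neg hi]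
      exact stronglyMeasurable_const
  have hZ1 (n i : ℕ) (ω : Ω) : ‖Z n i ω‖ ≤ 1 := by
    dsimp only [Z]
    split_ifs <;> simp [Complex.norm_exp]
  have hprod (n : ℕ) (ω : Ω) :
      Complex.exp (Complex.I * (θ * ∑ i ∈ Finset.Icc 1 (k n), X n i ω))
        = ∏ i ∈ range (k n), Z n i ω := by
    push_cast
    rw [mul_sum, mul_sum, Complex.exp_sum, prod_Icc_one_eq_prod_range]
    exact prod_congr rfl fun i hi => (congrFun (hZ_of_lt (mem_range.1 hi)) ω).symm
  have hcond : (fun n ω => ∏ i ∈ Finset.Icc 1 (k n),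
      (μ[fun ω' => Complex.exp (Complex.I * (θ * X n i ω')) | F n (i - 1)]) ω)
        = fun n => condProd μ (𝓕 n) (Z n) (k n) := by
    ext n ω
    rw [prod_Icc_one_eq_prod_range]
    refine prod_congr rfl fun i hi => ?_
    rw [hZ_of_lt (mem_range.1 hi), Nat.add_sub_cancel]
  rw [hcond] at hconv
  simp_rw [hprod]
  exact tendsto_integral_prod_of_tendstoInMeasure_condProd hZ hZ1 hC hconv
end
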